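/- arXiv:1203.6047 — 9 statements merged into one kernel-verified Lean document; each statement's English description precedes it below -/
import Mathlib

section
/- Let G be a Polish group acting continuously by isometries on a metric space (X,d) with at least one unbounded orbit. Then there exist a separable Banach space E and a continuous affine isometric action of G on E all of whose orbits are unbounded. -/
/-!
Fix `x₀` with an unbounded orbit. The map `y ↦ dist y · - dist x₀ ·` embeds `X` isometrically
into the Banach space `X →ᵇ ℝ`, sending `x₀` to `0` and intertwining the action on `X` with the
affine isometric action `f ↦ f (g⁻¹ • ·) + b g`, whose cocycle `b g` is the image of `g • x₀`.
The closed linear span of the cocycle is invariant and separable, since `b` is continuous and `G`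
is separable. The vectors with continuous orbit map under the linear part form a closed subspace
(the translations are isometries, hence equicontinuous) containing the cocycle, so the action on
the span is continuous. Orbits of an isometric action are all bounded or all unbounded, and the
orbit of `0` is isometric to the orbit of `x₀`. Finally a Hahn–Banach norming sequence embeds
any separable Banach space linearly isometrically into `ℕ →ᵇ ℝ`, which gives a model of the span
in `Type`.
-/

open BoundedContinuousFunction TopologicalSpace Bornology Set

theorem UniformEquicontinuous.isClosed_setOf_continuous {ι α β : Type*} [TopologicalSpace ι]
    [UniformSpace α] [UniformSpace β] {F : ι → α → β} (hF : UniformEquicontinuous F) :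
    IsClosed {a | Continuous fun i => F i a} :=
  IsClosed.preimage (uniformEquicontinuous_iff_uniformContinuous.1 hF).continuous
    (UniformFun.isClosed_setOfPred_continuous ι)

theorem Isometry.isBounded_range_comp_iff {ι Y Z : Type*} [PseudoMetricSpace Y]
    [PseudoMetricSpace Z] {f : Y → Z} (hf : Isometry f) {u : ι → Y} :
    IsBounded (range (f ∘ u)) ↔ IsBounded (range u) := by
  simp only [Metric.isBounded_range_iff, Function.comp_apply, hf.dist_eq]

theorem isBounded_range_apply_iff_of_isometry {ι Y : Type*} [PseudoMetricSpace Y]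
    {ρ : ι → Y → Y} (hρ : ∀ i, Isometry (ρ i)) (x y : Y) :
    IsBounded (range fun i => ρ i x) ↔ IsBounded (range fun i => ρ i y) := by
  suffices ∀ x y, IsBounded (range fun i => ρ i x) → IsBounded (range fun i => ρ i y) from
    ⟨this x y, this y x⟩
  intro x y
  simp only [Metric.isBounded_range_iff]
  rintro ⟨C, hC⟩
  refine ⟨dist y x + C + dist x y, fun i j => ?_⟩
  calc dist (ρ i y) (ρ j y) ≤ dist (ρ i y) (ρ i x) + dist (ρ i x) (ρ j x) + dist (ρ j x) (ρ j y) :=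
        dist_triangle4 _ _ _ _
    _ ≤ dist y x + C + dist x y := by
      rw [(hρ i).dist_eq, (hρ j).dist_eq]; gcongr; exact hC i j

theorem exists_linearIsometry_nat_boundedContinuousFunction (𝕜 E : Type*) [RCLike 𝕜]
    [NormedAddCommGroup E] [NormedSpace 𝕜 E] [SeparableSpace E] :
    Nonempty (E →ₗᵢ[𝕜] (ℕ →ᵇ 𝕜)) := by
  obtain ⟨x, hx⟩ := exists_dense_seq E
  choose φ hφ_norm hφ_apply using fun n => exists_dual_vector'' 𝕜 (x n)
  have hφ_le (n : ℕ) (v : E) : ‖φ n v‖ ≤ ‖v‖ := by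
    simpa using (φ n).le_of_opNorm_le (hφ_norm n) v
  let J : E →ₗ[𝕜] (ℕ →ᵇ 𝕜) :=
    { toFun v := ofNormedAddCommGroupDiscrete (fun n => φ n v) ‖v‖ (hφ_le · v)
      map_add' v w := by ext n; simp
      map_smul' c v := by ext n; simp }
  refine ⟨{ toLinearMap := J, norm_map' := fun v => le_antisymm ?_ ?_ }⟩
  · exact (norm_le (norm_nonneg v)).2 (hφ_le · v)
  · refine le_of_forall_pos_le_add fun ε hε => ?_
    obtain ⟨n, hn⟩ := hx.exists_dist_lt v (half_pos hε)
    rw [dist_eq_norm] at hn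
    have hJ : ‖φ n v‖ ≤ ‖J v‖ := norm_coe_le_norm (J v) n
    calc ‖v‖ ≤ ‖x n‖ + ‖v - x n‖ := norm_le_norm_add_norm_sub' v (x n)
      _ = ‖φ n v - φ n (v - x n)‖ + ‖v - x n‖ := by
        rw [← map_sub, sub_sub_cancel, hφ_apply, RCLike.norm_ofReal, abs_norm]
      _ ≤ ‖φ n v‖ + ‖φ n (v - x n)‖ + ‖v - x n‖ := by gcongr; exact norm_sub_le _ _
      _ ≤ ‖J v‖ + ‖v - x n‖ + ‖v - x n‖ := by grw [hJ, hφ_le n]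
      _ ≤ ‖J v‖ + ε := by linarith

theorem exists_linearIsometryEquiv_of_separable (M : Type*) [NormedAddCommGroup M]
    [NormedSpace ℝ M] [CompleteSpace M] [SeparableSpace M] :
    ∃ (E : Type) (_ : NormedAddCommGroup E) (_ : NormedSpace ℝ E) (_ : CompleteSpace E)
      (_ : SeparableSpace E), Nonempty (M ≃ₗᵢ[ℝ] E) := by
  obtain ⟨J⟩ := exists_linearIsometry_nat_boundedContinuousFunction ℝ M
  let e := J.equivRange
  exact ⟨_, inferInstance, inferInstance,
    e.symm.toIsometryEquiv.completeSpace,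
    e.surjective.denseRange.separableSpace e.continuous, ⟨e⟩⟩

def Submodule.continuousVectors {ι R E : Type*} [TopologicalSpace ι] [Semiring R]
    [TopologicalSpace E] [AddCommMonoid E] [Module R E] [ContinuousAdd E] [ContinuousConstSMul R E]
    (T : ι → E →L[R] E) : Submodule R E where
  carrier := {v | Continuous fun i => T i v}
  zero_mem' := by simp only [mem_ofPred_eq, map_zero, continuous_const]
  add_mem' hv hw := by simp only [mem_ofPred_eq, map_add]; exact hv.add hw
  smul_mem' c v hv := by simp only [mem_ofPred_eq, map_smul]; exact hv.const_smul c

theorem Submodule.isClosed_continuousVectors {ι R E : Type*} [TopologicalSpace ι] [Semiring R]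
    [SeminormedAddCommGroup E] [Module R E] [ContinuousConstSMul R E] {T : ι → E →L[R] E}
    {K : NNReal} (hT : ∀ i, LipschitzWith K (T i)) :
    IsClosed (continuousVectors T : Set E) :=
  (LipschitzWith.uniformEquicontinuous _ K hT).isClosed_setOf_continuous

namespace BoundedContinuousFunction

variable {G X : Type*} [Group G] [PseudoMetricSpace X] [MulAction G X]

def distDiff (x₀ y : X) : X →ᵇ ℝ :=
  ofNormedAddCommGroup (fun z => dist y z - dist x₀ z) (by fun_prop) (dist y x₀)
    fun z => abs_dist_sub_le y x₀ z

@[simp] theorem distDiff_apply (x₀ y z : X) : distDiff x₀ y z = dist y z - dist x₀ z := rfl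

theorem distDiff_self (x₀ : X) : distDiff x₀ x₀ = 0 := by
  ext; simp

theorem isometry_distDiff (x₀ : X) : Isometry (distDiff x₀) := by
  refine Isometry.of_dist_eq fun y y' => le_antisymm ?_ ?_
  · refine (dist_le dist_nonneg).2 fun z => ?_
    simpa [Real.dist_eq] using abs_dist_sub_le y y' z
  · simpa [Real.dist_eq] using dist_coe_le_dist (f := distDiff x₀ y) (g := distDiff x₀ y') y'

variable (G) in
noncomputable def cocycleSpan (x₀ : X) : Submodule ℝ (X →ᵇ ℝ) :=
  (Submodule.span ℝ (range fun g : G => distDiff x₀ (g • x₀))).topologicalClosure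

theorem distDiff_smul_mem_cocycleSpan (x₀ : X) (g : G) :
    distDiff x₀ (g • x₀) ∈ cocycleSpan G x₀ :=
  Submodule.le_topologicalClosure _ (Submodule.subset_span ⟨g, rfl⟩)

instance (x₀ : X) : CompleteSpace (cocycleSpan G x₀) :=
  (Submodule.isClosed_topologicalClosure _).completeSpace_coe

theorem continuous_distDiff_smul [TopologicalSpace G] [ContinuousSMul G X] (x₀ y : X) :
    Continuous fun g : G => distDiff x₀ (g • y) :=
  (isometry_distDiff x₀).continuous.comp (continuous_id.smul continuous_const)

instance [TopologicalSpace G] [SeparableSpace G] [ContinuousSMul G X] (x₀ : X) :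
    SeparableSpace (cocycleSpan G x₀) :=
  ((isSeparable_range (continuous_distDiff_smul x₀ x₀)).span.closure).separableSpace

section Isometric

variable [IsIsometricSMul G X]

variable (X) in
noncomputable def leftTranslate (g : G) : (X →ᵇ ℝ) →L[ℝ] (X →ᵇ ℝ) :=
  compContinuousCLM ℝ ℝ ⟨(g⁻¹ • ·), continuous_const_smul g⁻¹⟩

@[simp] theorem leftTranslate_apply (g : G) (f : X →ᵇ ℝ) (x : X) :
    leftTranslate X g f x = f (g⁻¹ • x) := rfl

theorem leftTranslate_one (f : X →ᵇ ℝ) : leftTranslate X (1 : G) f = f := by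
  ext; simp

theorem leftTranslate_mul (g h : G) (f : X →ᵇ ℝ) :
    leftTranslate X (g * h) f = leftTranslate X g (leftTranslate X h f) := by
  ext; simp [mul_smul]

theorem norm_leftTranslate (g : G) (f : X →ᵇ ℝ) : ‖leftTranslate X g f‖ = ‖f‖ := by
  refine le_antisymm (norm_compContinuous_le _ _) ?_
  calc ‖f‖ = ‖leftTranslate X g⁻¹ (leftTranslate X g f)‖ := by
        rw [← leftTranslate_mul, inv_mul_cancel, leftTranslate_one]
    _ ≤ ‖leftTranslate X g f‖ := norm_compContinuous_le _ _

theorem leftTranslate_distDiff (x₀ : X) (g : G) (y : X) :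
    leftTranslate X g (distDiff x₀ y) = distDiff x₀ (g • y) - distDiff x₀ (g • x₀) := by
  ext z
  simp only [leftTranslate_apply, distDiff_apply, coe_sub, Pi.sub_apply]
  rw [← dist_smul g y, ← dist_smul g x₀, smul_inv_smul]
  ring

noncomputable def affineTranslate (x₀ : X) (g : G) (f : X →ᵇ ℝ) : X →ᵇ ℝ :=
  leftTranslate X g f + distDiff x₀ (g • x₀)

theorem affineTranslate_zero (x₀ : X) (g : G) :
    affineTranslate x₀ g 0 = distDiff x₀ (g • x₀) := by
  simp [affineTranslate]

theorem affineTranslate_one (x₀ : X) (f : X →ᵇ ℝ) : affineTranslate x₀ (1 : G) f = f := by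
  rw [affineTranslate, leftTranslate_one, one_smul, distDiff_self, add_zero]

theorem affineTranslate_mul (x₀ : X) (g h : G) (f : X →ᵇ ℝ) :
    affineTranslate x₀ (g * h) f = affineTranslate x₀ g (affineTranslate x₀ h f) := by
  simp only [affineTranslate, leftTranslate_mul, map_add, leftTranslate_distDiff, mul_smul]
  abel

theorem isometry_affineTranslate (x₀ : X) (g : G) : Isometry (affineTranslate x₀ g) :=
  Isometry.of_dist_eq fun f f' => by
    rw [affineTranslate, affineTranslate, dist_add_right, dist_eq_norm, dist_eq_norm, ← map_sub,
      norm_leftTranslate]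

theorem leftTranslate_mem_cocycleSpan {x₀ : X} (g : G) {f : X →ᵇ ℝ}
    (hf : f ∈ cocycleSpan G x₀) : leftTranslate X g f ∈ cocycleSpan G x₀ := by
  refine (Module.End.mem_invtSubmodule _).1
    (Submodule.topologicalClosure_mem_invtSubmodule ?_) hf
  rw [Module.End.mem_invtSubmodule_iff_map_le, Submodule.map_span, Submodule.span_le]
  rintro _ ⟨_, ⟨h, rfl⟩, rfl⟩
  rw [ContinuousLinearMap.coe_coe, leftTranslate_distDiff, ← mul_smul]
  exact sub_mem (Submodule.subset_span ⟨g * h, rfl⟩) (Submodule.subset_span ⟨g, rfl⟩)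

theorem affineTranslate_mem_cocycleSpan {x₀ : X} (g : G) {f : X →ᵇ ℝ}
    (hf : f ∈ cocycleSpan G x₀) : affineTranslate x₀ g f ∈ cocycleSpan G x₀ :=
  add_mem (leftTranslate_mem_cocycleSpan g hf) (distDiff_smul_mem_cocycleSpan x₀ g)

noncomputable def cocycleAction (x₀ : X) (g : G) (f : cocycleSpan G x₀) : cocycleSpan G x₀ :=
  ⟨affineTranslate x₀ g f, affineTranslate_mem_cocycleSpan g f.2⟩

theorem cocycleAction_one (x₀ : X) (f : cocycleSpan G x₀) : cocycleAction x₀ 1 f = f :=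
  Subtype.ext (affineTranslate_one x₀ f)

theorem cocycleAction_mul (x₀ : X) (g h : G) (f : cocycleSpan G x₀) :
    cocycleAction x₀ (g * h) f = cocycleAction x₀ g (cocycleAction x₀ h f) :=
  Subtype.ext (affineTranslate_mul x₀ g h f)

theorem isometry_cocycleAction (x₀ : X) (g : G) : Isometry (cocycleAction x₀ g) :=
  Isometry.of_dist_eq fun f f' => (isometry_affineTranslate x₀ g).dist_eq f f'

theorem not_isBounded_range_cocycleAction {x₀ : X}
    (hx₀ : ¬IsBounded (range fun g : G => g • x₀)) (f : cocycleSpan G x₀) :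
    ¬IsBounded (range fun g => cocycleAction x₀ g f) := by
  rw [isBounded_range_apply_iff_of_isometry (isometry_cocycleAction x₀) f 0,
    ← isometry_subtype_coe.isBounded_range_comp_iff]
  convert (isometry_distDiff x₀).isBounded_range_comp_iff.not.2 hx₀ using 3
  exact funext fun g => affineTranslate_zero x₀ g

variable [TopologicalSpace G] [ContinuousSMul G X]

theorem cocycleSpan_le_continuousVectors (x₀ : X) :
    cocycleSpan G x₀ ≤ Submodule.continuousVectors (leftTranslate X (G := G)) := by
  refine Submodule.topologicalClosure_minimal _ ?_
    (Submodule.isClosed_continuousVectors (K := 1) fun g => ?_)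
  · rw [Submodule.span_le]
    rintro _ ⟨h, rfl⟩
    show Continuous fun g : G => leftTranslate X g (distDiff x₀ (h • x₀))
    simp only [leftTranslate_distDiff]
    exact (continuous_distDiff_smul x₀ _).sub (continuous_distDiff_smul x₀ x₀)
  · exact LipschitzWith.of_dist_le_mul fun f f' => by
      rw [dist_eq_norm, dist_eq_norm, ← map_sub, norm_leftTranslate, NNReal.coe_one, one_mul]

theorem continuous_affineTranslate_apply {x₀ : X} {f : X →ᵇ ℝ} (hf : f ∈ cocycleSpan G x₀) :
    Continuous fun g : G => affineTranslate x₀ g f :=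
  (cocycleSpan_le_continuousVectors x₀ hf).add (continuous_distDiff_smul x₀ x₀)

theorem continuous_cocycleAction (x₀ : X) :
    Continuous fun p : G × cocycleSpan G x₀ => cocycleAction x₀ p.1 p.2 :=
  continuous_prod_of_continuous_lipschitzWith' _ 1
    (fun g => (isometry_cocycleAction x₀ g).lipschitz)
    (fun f => (continuous_affineTranslate_apply f.2).subtype_mk _)

end Isometric

end BoundedContinuousFunction

open BoundedContinuousFunction

theorem exists_isometric_action_copy_of_separable {G M : Type*} [Group G] [TopologicalSpace G]
    [NormedAddCommGroup M] [NormedSpace ℝ M] [CompleteSpace M] [SeparableSpace M]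
    (ρ : G → M → M) (h_one : ∀ x, ρ 1 x = x) (h_mul : ∀ g h x, ρ (g * h) x = ρ g (ρ h x))
    (h_iso : ∀ g, Isometry (ρ g)) (h_cont : Continuous fun p : G × M => ρ p.1 p.2)
    (h_unb : ∀ x, ¬IsBounded (range fun g => ρ g x)) :
    ∃ (E : Type) (_ : NormedAddCommGroup E) (_ : NormedSpace ℝ E) (_ : CompleteSpace E)
      (_ : SeparableSpace E) (ρ' : G → E → E),
      (∀ x : E, ρ' 1 x = x) ∧
      (∀ g h : G, ∀ x : E, ρ' (g * h) x = ρ' g (ρ' h x)) ∧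
      (∀ g : G, Isometry (ρ' g)) ∧
      (∀ g : G, Function.Surjective (ρ' g)) ∧
      Continuous (fun p : G × E => ρ' p.1 p.2) ∧
      (∀ x : E, ¬ IsBounded (range fun g : G => ρ' g x)) := by
  obtain ⟨E, iE, iS, iC, iSep, ⟨e⟩⟩ := exists_linearIsometryEquiv_of_separable M
  refine ⟨E, iE, iS, iC, iSep, fun g v => e (ρ g (e.symm v)), ?_, ?_, ?_, ?_, ?_, ?_⟩
  · intro v
    simp [h_one]
  · intro g h v
    simp [h_mul]
  · exact fun g => e.isometry.comp ((h_iso g).comp e.symm.isometry)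
  · intro g v
    exact ⟨e (ρ g⁻¹ (e.symm v)), by simp [← h_mul, h_one]⟩
  · exact e.continuous.comp
      (h_cont.comp (continuous_fst.prodMk (e.symm.continuous.comp continuous_snd)))
  · intro v
    exact (e.isometry.isBounded_range_comp_iff (u := fun g => ρ g (e.symm v))).not.2 (h_unb _)

theorem statement0_general {G : Type*} [Group G] [TopologicalSpace G] [PolishSpace G]
    {X : Type*} [MetricSpace X] [MulAction G X]
    (hcont : Continuous fun p : G × X => p.1 • p.2)
    (hiso : ∀ g : G, Isometry fun x : X => g • x)
    (hunb : ∃ x : X, ¬ Bornology.IsBounded (Set.range fun g : G => g • x)) :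
    ∃ (E : Type) (_ : NormedAddCommGroup E) (_ : NormedSpace ℝ E) (_ : CompleteSpace E)
      (_ : TopologicalSpace.SeparableSpace E) (ρ : G → E → E),
      (∀ x : E, ρ 1 x = x) ∧
      (∀ g h : G, ∀ x : E, ρ (g * h) x = ρ g (ρ h x)) ∧
      (∀ g : G, Isometry (ρ g)) ∧
      (∀ g : G, Function.Surjective (ρ g)) ∧
      Continuous (fun p : G × E => ρ p.1 p.2) ∧
      (∀ x : E, ¬ Bornology.IsBounded (Set.range fun g : G => ρ g x)) := by
  obtain ⟨x₀, hx₀⟩ := hunb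
  have : IsIsometricSMul G X := ⟨hiso⟩
  have : ContinuousSMul G X := ⟨hcont⟩
  exact exists_isometric_action_copy_of_separable (M := cocycleSpan G x₀) (cocycleAction x₀)
    (cocycleAction_one x₀) (cocycleAction_mul x₀) (isometry_cocycleAction x₀)
    (continuous_cocycleAction x₀) (not_isBounded_range_cocycleAction hx₀)

/-- Let `G` be a Polish group acting continuously by isometries on a metric
space `(X, d)` with at least one unbounded orbit. Then there exist a separable Banach space `E`
and a continuous affine isometric action of `G` on `E` (i.e. a jointly continuous action by
surjective isometries) all of whose orbits are unbounded. -/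
theorem statement0 {G : Type*} [Group G] [TopologicalSpace G] [IsTopologicalGroup G] [PolishSpace G]
    {X : Type*} [MetricSpace X] [MulAction G X]
    (hcont : Continuous fun p : G × X => p.1 • p.2)
    (hiso : ∀ g : G, Isometry fun x : X => g • x)
    (hunb : ∃ x : X, ¬ Bornology.IsBounded (Set.range fun g : G => g • x)) :
    ∃ (E : Type) (_ : NormedAddCommGroup E) (_ : NormedSpace ℝ E) (_ : CompleteSpace E)
      (_ : TopologicalSpace.SeparableSpace E) (ρ : G → E → E),
      (∀ x : E, ρ 1 x = x) ∧
      (∀ g h : G, ∀ x : E, ρ (g * h) x = ρ g (ρ h x)) ∧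
      (∀ g : G, Isometry (ρ g)) ∧
      (∀ g : G, Function.Surjective (ρ g)) ∧
      Continuous (fun p : G × E => ρ p.1 p.2) ∧
      (∀ x : E, ¬ Bornology.IsBounded (Set.range fun g : G => ρ g x)) :=
  statement0_general hcont hiso hunb
end

section
/- Let G be a Polish group and let d be a compatible left-invariant metric on G (i.e., d induces the topology of G and d(gx,gy) = d(x,y) for all g,x,y ∈ G) which is unbounded. Then there exist a separable Banach space X and a continuous linear representation π : G → GL(X) which is unbounded, i.e., sup_{g∈G} ‖π(g)‖ = ∞. -/
/-!
Write `w x = 1 + d(x, 1)` and `c_g x = w (g⁻¹ x) / w x = (1 + d(x, g)) / (1 + d(x, 1))`.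
Then `π(g) u = c_g · (u ∘ g⁻¹)` is the left regular representation conjugated by multiplication
with `w`, so it acts on bounded continuous functions with `π(g) 1 = c_g` and
`‖π(g)‖ = ‖c_g‖ = 1 + d(g, 1)`, which is unbounded. Since `g ↦ c_g` is 1-Lipschitz, the orbit maps
of vectors in the span of the `c_g` are continuous; as `‖π(g)‖` is locally bounded, this passes to
the closed span `X` of the `c_g`, which is invariant, separable because `G` is, and on which the
action is then jointly continuous.
-/

open Filter Topology TopologicalSpace BoundedContinuousFunction

section OrbitContinuity

variable {G 𝕜 E : Type*} [TopologicalSpace G] [NontriviallyNormedField 𝕜]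
  [SeminormedAddCommGroup E] [NormedSpace 𝕜 E] {π : G → E →L[𝕜] E}

theorem isClosed_setOf_continuous_apply (hπ : ∀ g₀, ∃ C, ∀ᶠ g in 𝓝 g₀, ‖π g‖ ≤ C) :
    IsClosed {v : E | Continuous fun g => π g v} := by
  refine isClosed_iff_frequently.2 fun v hv => TendstoLocallyUniformly.continuous ?_ hv
  rw [Metric.tendstoLocallyUniformly_iff]
  intro ε hε g₀
  obtain ⟨C, hC⟩ := hπ g₀
  have hC₀ : 0 ≤ C := (norm_nonneg _).trans hC.self_of_nhds
  refine ⟨_, hC, ?_⟩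
  filter_upwards [Metric.ball_mem_nhds v (show 0 < ε / (C + 1) by positivity)] with w hw g hg
  calc dist (π g v) (π g w) = ‖π g (v - w)‖ := by rw [dist_eq_norm, map_sub]
    _ ≤ ‖π g‖ * ‖v - w‖ := (π g).le_opNorm _
    _ ≤ C * (ε / (C + 1)) := by
      rw [← dist_eq_norm, dist_comm]
      exact mul_le_mul hg hw.le dist_nonneg hC₀
    _ < ε := by
      rw [mul_div_assoc', div_lt_iff₀ (by positivity)]
      nlinarith

theorem continuous_apply_of_continuous_orbit (hπ : ∀ g₀, ∃ C, ∀ᶠ g in 𝓝 g₀, ‖π g‖ ≤ C)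
    (horb : ∀ v, Continuous fun g => π g v) :
    Continuous fun p : G × E => π p.1 p.2 := by
  refine continuous_iff_continuousAt.2 fun ⟨g₀, v₀⟩ => ?_
  obtain ⟨C, hC⟩ := hπ g₀
  rw [ContinuousAt, tendsto_iff_norm_sub_tendsto_zero]
  have hbound : ∀ᶠ p : G × E in 𝓝 (g₀, v₀),
      ‖π p.1 p.2 - π g₀ v₀‖ ≤ C * ‖p.2 - v₀‖ + ‖π p.1 v₀ - π g₀ v₀‖ := by
    filter_upwards [hC.prod_inl_nhds v₀] with ⟨g, v⟩ hg
    calc ‖π g v - π g₀ v₀‖ = ‖π g (v - v₀) + (π g v₀ - π g₀ v₀)‖ := by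
          rw [map_sub]; abel_nf
      _ ≤ ‖π g‖ * ‖v - v₀‖ + ‖π g v₀ - π g₀ v₀‖ :=
          (norm_add_le _ _).trans (add_le_add_left ((π g).le_opNorm _) _)
      _ ≤ C * ‖v - v₀‖ + ‖π g v₀ - π g₀ v₀‖ := by gcongr
  refine squeeze_zero' (Eventually.of_forall fun _ => norm_nonneg _) hbound ?_
  exact Continuous.tendsto' (by fun_prop) _ _ (by simp)

end OrbitContinuity

section Restrict

variable {M R E : Type*} [Monoid M] [Semiring R] [TopologicalSpace E] [AddCommMonoid E]
  [Module R E]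

def MonoidHom.restrictSubmodule (ρ : M →* (E →L[R] E)) (p : Submodule R E)
    (hp : ∀ g, ∀ x ∈ p, ρ g x ∈ p) : M →* (p →L[R] p) where
  toFun g := (ρ g).restrict (hp g)
  map_one' := by ext; simp
  map_mul' _ _ := by ext; simp

@[simp]
theorem MonoidHom.coe_restrictSubmodule_apply (ρ : M →* (E →L[R] E)) (p : Submodule R E)
    (hp : ∀ g, ∀ x ∈ p, ρ g x ∈ p) (g : M) (x : p) :
    (ρ.restrictSubmodule p hp g x : E) = ρ g x := rfl

end Restrict

theorem ContinuousLinearMap.norm_restrict_le {𝕜 E : Type*} [NontriviallyNormedField 𝕜]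
    [SeminormedAddCommGroup E] [NormedSpace 𝕜 E] (f : E →L[𝕜] E) {p : Submodule 𝕜 E}
    (hf : ∀ x ∈ p, f x ∈ p) : ‖f.restrict hf‖ ≤ ‖f‖ :=
  (f.restrict hf).opNorm_le_bound (norm_nonneg _) fun x => f.le_opNorm x

theorem exists_representation_type_zero {G : Type*} [Group G] [TopologicalSpace G]
    {Y : Type*} [NormedAddCommGroup Y] [NormedSpace ℝ Y] [CompleteSpace Y] [SeparableSpace Y]
    (ρ : G →* (Y →L[ℝ] Y)) (hρ : Continuous fun p : G × Y => ρ p.1 p.2) :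
    ∃ (X : Type) (_ : NormedAddCommGroup X) (_ : NormedSpace ℝ X) (_ : CompleteSpace X)
      (_ : SeparableSpace X) (π : G →* (X ≃L[ℝ] X)),
      Continuous (fun p : G × X => π p.1 p.2) ∧ ∀ g, ‖(π g : X →L[ℝ] X)‖ = ‖ρ g‖ := by
  have : Small.{0} Y := small_of_injective (kuratowskiEmbedding.isometry Y).injective
  let e : Shrink.{0} Y ≃ₗᵢ[ℝ] Y := { Shrink.linearEquiv ℝ Y with norm_map' := fun _ => rfl }
  have : CompleteSpace (Shrink.{0} Y) := e.toIsometryEquiv.completeSpace_iff.2 ‹_›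
  have : SeparableSpace (Shrink.{0} Y) :=
    e.symm.surjective.denseRange.separableSpace e.symm.continuous
  let σ : G →* (Shrink.{0} Y →L[ℝ] Shrink.{0} Y) :=
    (e.symm.toContinuousLinearEquiv.conjContinuousAlgEquiv : (Y →L[ℝ] Y) →* _).comp ρ
  refine ⟨Shrink.{0} Y, inferInstance, inferInstance, inferInstance, inferInstance,
    (ContinuousLinearEquiv.unitsEquiv ℝ _).toMonoidHom.comp σ.toHomUnits, ?_, fun g => ?_⟩
  · exact e.symm.continuous.comp
      (hρ.comp (continuous_fst.prodMk (e.continuous.comp continuous_snd)))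
  · change ‖(e.symm : Y →L[ℝ] Shrink.{0} Y) ∘L ρ g ∘L (e : Shrink.{0} Y →L[ℝ] Y)‖ = ‖ρ g‖
    rw [ContinuousLinearMap.opNorm_linearIsometryEquiv_comp,
      ContinuousLinearMap.opNorm_comp_linearIsometryEquiv]

section DistWeight

variable {G : Type*} [Group G] [PseudoMetricSpace G]

theorem abs_one_add_dist_div_one_add_dist_le (g x : G) :
    |(1 + dist x g) / (1 + dist x 1)| ≤ 1 + dist g 1 := by
  have h₀ : 0 < 1 + dist x 1 := by positivity
  rw [abs_of_nonneg (by positivity), div_le_iff₀ h₀]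
  nlinarith [dist_triangle x 1 g, dist_comm g (1 : G), dist_nonneg (x := g) (y := 1),
    dist_nonneg (x := x) (y := 1)]

noncomputable def distWeight (g : G) : G →ᵇ ℝ :=
  .ofNormedAddCommGroup (fun x => (1 + dist x g) / (1 + dist x 1))
    (.div (by fun_prop) (by fun_prop) fun x => by positivity) (1 + dist g 1)
    (abs_one_add_dist_div_one_add_dist_le g)

@[simp]
theorem distWeight_apply (g x : G) : distWeight g x = (1 + dist x g) / (1 + dist x 1) := rfl

@[simp]
theorem distWeight_one : distWeight (1 : G) = 1 := by
  ext x
  simp [div_self (by positivity : (1 + dist x 1 : ℝ) ≠ 0)]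

theorem distWeight_mul [IsIsometricSMul G G] (g h x : G) :
    distWeight (g * h) x = distWeight g x * distWeight h (g⁻¹ * x) := by
  have e₁ : dist (g⁻¹ * x) h = dist x (g * h) := by
    rw [← dist_mul_left g, mul_inv_cancel_left]
  have e₂ : dist (g⁻¹ * x) 1 = dist x g := by
    rw [← dist_mul_left g, mul_inv_cancel_left, mul_one]
  simp only [distWeight_apply, e₁, e₂]
  field_simp

theorem norm_distWeight (g : G) : ‖distWeight g‖ = 1 + dist g 1 := by
  refine le_antisymm (norm_ofNormedAddCommGroup_le _ (by positivity) _) ?_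
  simpa [dist_comm (1 : G) g, abs_of_nonneg (by positivity : (0 : ℝ) ≤ 1 + dist g 1)] using
    (distWeight g).norm_coe_le_norm 1

theorem lipschitzWith_distWeight : LipschitzWith 1 (distWeight : G → G →ᵇ ℝ) := by
  refine LipschitzWith.of_dist_le_mul fun a b => ?_
  rw [NNReal.coe_one, one_mul, dist_le dist_nonneg]
  intro x
  have h₀ : 0 < 1 + dist x 1 := by positivity
  rw [distWeight_apply, distWeight_apply, Real.dist_eq, div_sub_div_same, abs_div,
    abs_of_pos h₀, div_le_iff₀ h₀]
  have : |1 + dist x a - (1 + dist x b)| ≤ dist a b := by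
    rw [add_sub_add_left_eq_sub, dist_comm x a, dist_comm x b]
    exact abs_dist_sub_le a b x
  nlinarith [dist_nonneg (x := a) (y := b), dist_nonneg (x := x) (y := 1)]

theorem exists_eventually_norm_le_of_le_one_add_dist {F : Type*} [SeminormedAddCommGroup F]
    {π : G → F} (hπ : ∀ g, ‖π g‖ ≤ 1 + dist g 1) (g₀ : G) : ∃ C, ∀ᶠ g in 𝓝 g₀, ‖π g‖ ≤ C :=
  ⟨_, (((continuous_id.dist continuous_const).const_add 1).tendsto g₀).eventually_le_const
    (lt_add_one _) |>.mono fun g hg => (hπ g).trans hg⟩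

variable (G) in
noncomputable def closedSpanDistWeight : Submodule ℝ (G →ᵇ ℝ) :=
  (Submodule.span ℝ (Set.range distWeight)).topologicalClosure

-- Without these two instances `closedSpanDistWeight G →L[ℝ] closedSpanDistWeight G` gets no
-- operator norm: the default ones go through the additive structure of `G →ᵇ ℝ`, which is not
-- reducibly the one underlying its norm.
noncomputable instance : NormedAddCommGroup (closedSpanDistWeight G) :=
  (closedSpanDistWeight G).normedAddCommGroup

noncomputable instance : NormedSpace ℝ (closedSpanDistWeight G) :=
  (closedSpanDistWeight G).normedSpace

instance : CompleteSpace (closedSpanDistWeight G) :=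
  Submodule.topologicalClosure.completeSpace _

instance [SeparableSpace G] : SeparableSpace (closedSpanDistWeight G) := by
  have := (isSeparable_range (lipschitzWith_distWeight (G := G)).continuous).span (R := ℝ)
  exact IsSeparable.separableSpace (by simpa [closedSpanDistWeight] using this.closure)

theorem distWeight_mem_closedSpanDistWeight (g : G) : distWeight g ∈ closedSpanDistWeight G :=
  Submodule.le_topologicalClosure _ (Submodule.subset_span ⟨g, rfl⟩)

end DistWeight

section WeightedTranslation

variable {G : Type*} [Group G] [PseudoMetricSpace G] [IsIsometricSMul G G]
  [SeparatelyContinuousMul G]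

noncomputable def weightedTranslation : G →* ((G →ᵇ ℝ) →L[ℝ] (G →ᵇ ℝ)) where
  toFun g := ContinuousLinearMap.mul ℝ (G →ᵇ ℝ) (distWeight g) ∘L
    compContinuousCLM ℝ ℝ (ContinuousMap.mulLeft g⁻¹)
  map_one' := by ext u x; simp
  map_mul' g h := by ext u x; simp [distWeight_mul g h x, mul_assoc]

theorem weightedTranslation_apply (g : G) (u : G →ᵇ ℝ) (x : G) :
    weightedTranslation g u x = distWeight g x * u (g⁻¹ * x) := rfl

theorem weightedTranslation_distWeight (g h : G) :
    weightedTranslation g (distWeight h) = distWeight (g * h) := by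
  ext x
  rw [weightedTranslation_apply, distWeight_mul]

theorem norm_weightedTranslation_le (g : G) : ‖weightedTranslation g‖ ≤ 1 + dist g 1 := by
  refine (weightedTranslation g).opNorm_le_bound (by positivity) fun u => ?_
  calc ‖weightedTranslation g u‖ ≤ ‖distWeight g‖ * ‖u.compContinuous (.mulLeft g⁻¹)‖ :=
        norm_mul_le _ _
    _ ≤ (1 + dist g 1) * ‖u‖ := by
        rw [norm_distWeight]; gcongr; exact norm_compContinuous_le _ _

theorem weightedTranslation_mem_closedSpanDistWeight (g : G) :
    ∀ u ∈ closedSpanDistWeight G, weightedTranslation g u ∈ closedSpanDistWeight G := by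
  have hspan : Submodule.span ℝ (Set.range distWeight) ∈
      Module.End.invtSubmodule (weightedTranslation g : (G →ᵇ ℝ) →ₗ[ℝ] G →ᵇ ℝ) := by
    refine Submodule.span_le.2 ?_
    rintro _ ⟨h, rfl⟩
    rw [SetLike.mem_coe, Submodule.mem_comap, ContinuousLinearMap.coe_coe,
      weightedTranslation_distWeight]
    exact Submodule.subset_span ⟨g * h, rfl⟩
  exact fun u hu => Submodule.topologicalClosure_mem_invtSubmodule hspan hu

theorem continuous_weightedTranslation_apply {u : G →ᵇ ℝ} (hu : u ∈ closedSpanDistWeight G) :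
    Continuous fun g : G => weightedTranslation g u := by
  refine closure_minimal (fun v hv => ?_) (isClosed_setOf_continuous_apply
    (exists_eventually_norm_le_of_le_one_add_dist norm_weightedTranslation_le)) hu
  induction hv using Submodule.span_induction with
  | mem _ hv =>
    obtain ⟨h, rfl⟩ := hv
    simp only [Set.mem_ofPred_eq, weightedTranslation_distWeight]
    exact lipschitzWith_distWeight.continuous.comp (continuous_mul_const h)
  | zero => simpa using continuous_const
  | add _ _ _ _ hv hw =>
    simp only [Set.mem_ofPred_eq, map_add] at hv hw ⊢
    exact hv.add hw
  | smul r _ _ hv =>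
    simp only [Set.mem_ofPred_eq, map_smul] at hv ⊢
    exact hv.const_smul r

noncomputable def distWeightRep : G →* (closedSpanDistWeight G →L[ℝ] closedSpanDistWeight G) :=
  weightedTranslation.restrictSubmodule _ weightedTranslation_mem_closedSpanDistWeight

theorem norm_distWeightRep (g : G) : ‖distWeightRep g‖ = 1 + dist g 1 := by
  refine le_antisymm ((ContinuousLinearMap.norm_restrict_le _
    (weightedTranslation_mem_closedSpanDistWeight g)).trans (norm_weightedTranslation_le g)) ?_
  let e : closedSpanDistWeight G := ⟨distWeight 1, distWeight_mem_closedSpanDistWeight 1⟩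
  have he : ‖e‖ = 1 := by simp [e]
  calc 1 + dist g 1 = ‖(distWeightRep g e : G →ᵇ ℝ)‖ := by
        rw [distWeightRep, MonoidHom.coe_restrictSubmodule_apply, weightedTranslation_distWeight,
          mul_one, norm_distWeight]
    _ = ‖distWeightRep g e‖ := rfl
    _ ≤ ‖distWeightRep g‖ * ‖e‖ := (distWeightRep g).le_opNorm e
    _ = ‖distWeightRep g‖ := by rw [he, mul_one]

theorem continuous_distWeightRep_apply :
    Continuous fun p : G × closedSpanDistWeight G => distWeightRep p.1 p.2 :=
  continuous_apply_of_continuous_orbit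
    (exists_eventually_norm_le_of_le_one_add_dist fun g => (norm_distWeightRep g).le)
    fun v => (continuous_weightedTranslation_apply v.2).subtype_mk _

end WeightedTranslation

/-- Let `G` be a Polish group and `d` a compatible left-invariant metric on `G`
which is unbounded. Then there exist a separable Banach space `X` and a continuous linear
representation `π : G → GL(X)` (jointly continuous action by invertible bounded operators)
which is unbounded, i.e. `sup_{g ∈ G} ‖π(g)‖ = ∞`. -/
theorem statement1 {G : Type*} [Group G] [TopologicalSpace G] [IsTopologicalGroup G] [PolishSpace G]
    (d : G → G → ℝ)
    (hsymm : ∀ x y : G, d x y = d y x)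
    (hzero : ∀ x y : G, d x y = 0 ↔ x = y)
    (htri : ∀ x y z : G, d x z ≤ d x y + d y z)
    (hinv : ∀ g x y : G, d (g * x) (g * y) = d x y)
    (hcompat : ∀ s : Set G, IsOpen s ↔ ∀ x ∈ s, ∃ ε > 0, ∀ y : G, d x y < ε → y ∈ s)
    (hunbdd : ∀ C : ℝ, ∃ g h : G, C < d g h) :
    ∃ (X : Type) (_ : NormedAddCommGroup X) (_ : NormedSpace ℝ X) (_ : CompleteSpace X)
      (_ : TopologicalSpace.SeparableSpace X) (π : G →* (X ≃L[ℝ] X)),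
      Continuous (fun p : G × X => π p.1 p.2) ∧
      (∀ C : ℝ, ∃ g : G, C < ‖(π g : X →L[ℝ] X)‖) := by
  let : PseudoMetricSpace G := .ofDistTopology d (fun x => (hzero x x).2 rfl) hsymm htri hcompat
  have : IsIsometricSMul G G := ⟨fun g => Isometry.of_dist_eq (hinv g)⟩
  obtain ⟨X, hX₁, hX₂, hX₃, hX₄, π, hπ, hnorm⟩ :=
    exists_representation_type_zero (distWeightRep (G := G)) continuous_distWeightRep_apply
  refine ⟨X, hX₁, hX₂, hX₃, hX₄, π, hπ, fun C => ?_⟩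
  obtain ⟨g, h, hgh⟩ := hunbdd C
  refine ⟨g⁻¹ * h, ?_⟩
  have : dist (g⁻¹ * h) 1 = d g h := by
    rw [← dist_mul_left g, mul_inv_cancel_left, mul_one, dist_comm]; rfl
  rw [hnorm, norm_distWeightRep, this]
  linarith
end

section
/- For a Polish group G the following are equivalent: (1) G is bounded; (2) every left-uniformly continuous function φ : G → ℝ is bounded; (3) G has property (OB) and every open subgroup of G has finite index. -/
/-
(1) ⇒ (2): a function that moves by less than 1 along `V` moves by less than `k` along `V ^ k`,
and `G = F * V ^ k` with `F` finite.

(2) ⇒ (3): for an isometric action, `g ↦ d(g • x, x)` is left-uniformly continuous; and the cosets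
of an open subgroup of infinite index are countably many (`G` is separable), so numbering them
gives an unbounded left-uniformly continuous function.

(3) ⇒ (1): let `W` be a symmetric open neighbourhood of `1`. The open subgroup generated by `W` has
finite index, so `G = ⋃ k, W ^ k * R` for a finite set `R`. If no single `W ^ k * R` is all of `G`,
the level `x ↦ min {k | x ∈ W ^ k * R}` is unbounded, grows by at most `1` under right
multiplication by a neighbourhood of `1`, and by a bounded amount under right multiplication by
any fixed `g`. Smoothing it with a metric for the left uniformity yields a left-uniformly
continuous `ψ` with the same properties. Then `f ↦ f(· g) + (ψ(· g) - ψ)` is an isometric action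
on bounded continuous functions whose orbit of `0` is unbounded, contradicting (OB).
-/

open Pointwise

universe u

/-- A topological group has property (OB) if every continuous action of `G` by isometries on a
metric space has all orbits bounded. -/
def HasPropertyOB (G : Type u) [Group G] [TopologicalSpace G] : Prop :=
  ∀ (X : Type u) [MetricSpace X] (ρ : G → X → X),
    (∀ x : X, ρ 1 x = x) →
    (∀ g h : G, ∀ x : X, ρ (g * h) x = ρ g (ρ h x)) →
    (∀ g : G, Isometry (ρ g)) →
    Continuous (fun p : G × X => ρ p.1 p.2) →
    ∀ x : X, Bornology.IsBounded (Set.range fun g : G => ρ g x)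

/-- A topological group `G` is bounded if for every open neighbourhood `V` of the identity there
are a finite set `F ⊆ G` and `k ≥ 1` with `G = F V^k`. -/
def BoundedTopGroup (G : Type u) [Group G] [TopologicalSpace G] : Prop :=
  ∀ V : Set G, IsOpen V → (1 : G) ∈ V →
    ∃ F : Set G, F.Finite ∧ ∃ k : ℕ, 1 ≤ k ∧ F * V ^ k = Set.univ

/-- `φ : G → ℝ` is left-uniformly continuous. -/
def LeftUniformlyCts {G : Type u} [Group G] [TopologicalSpace G] (φ : G → ℝ) : Prop :=
  ∀ ε : ℝ, 0 < ε → ∃ V : Set G, IsOpen V ∧ (1 : G) ∈ V ∧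
    ∀ x y : G, x⁻¹ * y ∈ V → |φ x - φ y| < ε

open Filter Set Topology Uniformity Metric BoundedContinuousFunction

namespace SmoothLevel

variable {X : Type*} [PseudoMetricSpace X] (m : X → ℕ) (c : ℝ)

noncomputable def step (k : ℕ) (x : X) : ℝ := min 1 (infDist x {y | m y ≤ k} / c)

noncomputable def smooth (x : X) : ℝ := ∑ k ∈ Finset.range (m x), step m c k x

variable {m c}

lemma step_nonneg (hc : 0 ≤ c) (k : ℕ) (x : X) : 0 ≤ step m c k x :=
  le_min zero_le_one (div_nonneg infDist_nonneg hc)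

lemma step_le_one (k : ℕ) (x : X) : step m c k x ≤ 1 := min_le_left _ _

lemma step_eq_zero {k : ℕ} {x : X} (hx : m x ≤ k) : step m c k x = 0 := by
  simp [step, infDist_zero_of_mem (s := {y | m y ≤ k}) hx]

lemma abs_step_sub_step_le (hc : 0 ≤ c) (k : ℕ) (x y : X) :
    |step m c k x - step m c k y| ≤ dist x y / c := by
  set s := {y | m y ≤ k}
  have hlip : |infDist x s - infDist y s| ≤ dist x y := by
    rw [abs_sub_le_iff]
    constructor
    · linarith [infDist_le_infDist_add_dist (x := x) (y := y) (s := s)]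
    · linarith [infDist_le_infDist_add_dist (x := y) (y := x) (s := s), dist_comm x y]
  calc |step m c k x - step m c k y|
      ≤ max |1 - 1| |infDist x s / c - infDist y s / c| := abs_min_sub_min_le_max _ _ _ _
    _ = |infDist x s - infDist y s| / c := by
        rw [sub_self, abs_zero, max_eq_right (abs_nonneg _), ← sub_div, abs_div, abs_of_nonneg hc]
    _ ≤ dist x y / c := by gcongr

-- `h0` keeps the sublevel sets nonempty; `infDist x ∅ = 0` would break this lemma.
lemma step_eq_one (hc : 0 < c) (hm : ∀ x y, dist x y < c → m y ≤ m x + 1) (h0 : ∃ x, m x = 0)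
    {k : ℕ} {x : X} (hx : k + 1 < m x) : step m c k x = 1 := by
  obtain ⟨x₀, hx₀⟩ := h0
  have hfar : c ≤ infDist x {y | m y ≤ k} := by
    refine (le_infDist ⟨x₀, by simp [hx₀]⟩).2 fun y hy => not_lt.1 fun hxy => ?_
    have := hm y x (by rwa [dist_comm])
    simp only [mem_ofPred_eq] at hy
    omega
  exact min_eq_left ((one_le_div hc).2 hfar)

lemma smooth_eq_sum_of_le {x : X} {N : ℕ} (hN : m x ≤ N) :
    smooth m c x = ∑ k ∈ Finset.range N, step m c k x :=
  Finset.sum_subset (Finset.range_subset_range.2 hN) fun _ _ hk =>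
    step_eq_zero (by simpa using hk)

lemma abs_smooth_sub_le_one (hc : 0 < c) (hm : ∀ x y, dist x y < c → m y ≤ m x + 1)
    (h0 : ∃ x, m x = 0) (x : X) : |smooth m c x - m x| ≤ 1 := by
  have hle : smooth m c x ≤ m x := by
    simpa [smooth] using Finset.sum_le_card_nsmul (Finset.range (m x)) (step m c · x) 1
      fun k _ => step_le_one k x
  have hge : (m x : ℝ) - 1 ≤ smooth m c x := by
    rcases Nat.eq_zero_or_eq_succ_pred (m x) with hx | hx
    · simp [smooth, hx]
    · rw [smooth, hx, Finset.sum_range_succ, Finset.sum_congr rfl fun k hk =>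
        step_eq_one hc hm h0 (by rw [Finset.mem_range] at hk; omega)]
      simp only [Finset.sum_const, Finset.card_range, nsmul_eq_mul, mul_one, Nat.cast_succ]
      linarith [step_nonneg hc.le (m := m) (c := c) (m x).pred x]
  rw [abs_le]; constructor <;> linarith

lemma abs_smooth_sub_smooth_le (hc : 0 < c) (hm : ∀ x y, dist x y < c → m y ≤ m x + 1)
    (h0 : ∃ x, m x = 0) {x y : X} (hxy : dist x y < c) :
    |smooth m c x - smooth m c y| ≤ 2 * (dist x y / c) := by
  have hyx : m x ≤ m y + 1 := hm y x (by rwa [dist_comm])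
  have hxy' : m y ≤ m x + 1 := hm x y hxy
  set n := min (m x) (m y)
  have hzero : ∀ k ∈ Finset.range (n + 1), k ∉ Finset.Ico (n - 1) (n + 1) →
      |step m c k x - step m c k y| = 0 := by
    intro k hk hk'
    simp only [Finset.mem_range] at hk
    simp only [Finset.mem_Ico, not_and_or, not_le, not_lt] at hk'
    rw [step_eq_one hc hm h0 (by omega), step_eq_one hc hm h0 (by omega), sub_self, abs_zero]
  calc |smooth m c x - smooth m c y|
      = |∑ k ∈ Finset.range (n + 1), (step m c k x - step m c k y)| := by
        rw [smooth_eq_sum_of_le (N := n + 1) (by omega),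
          smooth_eq_sum_of_le (N := n + 1) (by omega), Finset.sum_sub_distrib]
    _ ≤ ∑ k ∈ Finset.range (n + 1), |step m c k x - step m c k y| :=
        Finset.abs_sum_le_sum_abs _ _
    _ = ∑ k ∈ Finset.Ico (n - 1) (n + 1), |step m c k x - step m c k y| :=
        (Finset.sum_subset (fun k hk => by simp_all) hzero).symm
    _ ≤ (Finset.Ico (n - 1) (n + 1)).card • (dist x y / c) :=
        Finset.sum_le_card_nsmul _ _ _ fun k _ => abs_step_sub_step_le hc.le k x y
    _ ≤ 2 * (dist x y / c) := by
        rw [nsmul_eq_mul, Nat.card_Ico]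
        gcongr
        exact_mod_cast (by omega : n + 1 - (n - 1) ≤ 2)

lemma uniformContinuous_smooth (hc : 0 < c) (hm : ∀ x y, dist x y < c → m y ≤ m x + 1)
    (h0 : ∃ x, m x = 0) : UniformContinuous (smooth m c) := by
  refine Metric.uniformContinuous_iff.2 fun ε hε => ⟨min c (c * ε / 3), by positivity, ?_⟩
  intro x y hxy
  rw [Real.dist_eq]
  have hsmall : dist x y / c < ε / 3 := by
    rw [div_lt_iff₀ hc]; linarith [min_le_right c (c * ε / 3)]
  linarith [abs_smooth_sub_smooth_le hc hm h0 (hxy.trans_le (min_le_left _ _))]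

end SmoothLevel

section LeftUniformity

variable {G : Type u} [Group G] [TopologicalSpace G] [IsTopologicalGroup G]

lemma LeftUniformlyCts.of_uniformContinuous {φ : G → ℝ}
    (hφ : @UniformContinuous G ℝ (IsTopologicalGroup.leftUniformSpace G) _ φ) :
    LeftUniformlyCts φ := by
  let := IsTopologicalGroup.leftUniformSpace G
  intro ε hε
  obtain ⟨t, ht, hts⟩ :=
    mem_comap.1 (uniformity_eq_comap_nhds_one_left G ▸ hφ (dist_mem_uniformity hε))
  obtain ⟨V, hVt, hV, h1V⟩ := mem_nhds_iff.1 ht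
  refine ⟨V, hV, h1V, fun x y hxy => ?_⟩
  have : dist (φ x) (φ y) < ε := hts (show (x, y) ∈ _ from hVt hxy)
  rwa [Real.dist_eq] at this

lemma LeftUniformlyCts.continuous {φ : G → ℝ} (hφ : LeftUniformlyCts φ) : Continuous φ := by
  refine continuous_iff_continuousAt.2 fun x => Metric.tendsto_nhds.2 fun ε hε => ?_
  obtain ⟨V, hV, h1V, hφV⟩ := hφ ε hε
  filter_upwards [(hV.preimage (continuous_const_mul x⁻¹)).mem_nhds (by simpa using h1V)]
    with y hy
  rw [Real.dist_eq, abs_sub_comm]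
  exact hφV x y hy

lemma exists_leftUniformlyCts_abs_sub_le_one [FirstCountableTopology G] (m : G → ℕ) {U : Set G}
    (hU : U ∈ 𝓝 1) (hmU : ∀ x, ∀ u ∈ U, m (x * u) ≤ m x + 1) (h0 : ∃ x, m x = 0) :
    ∃ φ : G → ℝ, LeftUniformlyCts φ ∧ ∀ x, |φ x - m x| ≤ 1 := by
  let := IsTopologicalGroup.leftUniformSpace G
  have : (𝓤 G).IsCountablyGenerated := by
    rw [uniformity_eq_comap_nhds_one_left]; infer_instance
  let := UniformSpace.pseudoMetricSpace G
  obtain ⟨c, hc, hcU⟩ := mem_uniformity_dist.1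
    (uniformity_eq_comap_nhds_one_left G ▸ preimage_mem_comap hU)
  have hm : ∀ x y, dist x y < c → m y ≤ m x + 1 := fun x y hxy => by
    simpa using hmU x _ (hcU hxy)
  exact ⟨SmoothLevel.smooth m c,
    .of_uniformContinuous (SmoothLevel.uniformContinuous_smooth hc hm h0),
    SmoothLevel.abs_smooth_sub_le_one hc hm h0⟩

end LeftUniformity

section RightTranslation

variable {G : Type u} [Group G] [TopologicalSpace G] [IsTopologicalGroup G] {ψ : G → ℝ}

noncomputable def rightDisplacement (hψ : LeftUniformlyCts ψ)
    (hbdd : ∀ g, ∃ C, ∀ x, |ψ (x * g) - ψ x| ≤ C) (g : G) : G →ᵇ ℝ where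
  toFun x := ψ (x * g) - ψ x
  continuous_toFun := (hψ.continuous.comp (continuous_mul_const g)).sub hψ.continuous
  map_bounded' := by
    obtain ⟨C, hC⟩ := hbdd g
    refine ⟨2 * C, fun x y => ?_⟩
    rw [Real.dist_eq]
    linarith [abs_sub (ψ (x * g) - ψ x) (ψ (y * g) - ψ y), hC x, hC y]

variable (hψ : LeftUniformlyCts ψ) (hbdd : ∀ g, ∃ C, ∀ x, |ψ (x * g) - ψ x| ≤ C)

lemma rightDisplacement_apply (g x : G) :
    rightDisplacement hψ hbdd g x = ψ (x * g) - ψ x := rfl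

lemma continuous_rightDisplacement : Continuous (rightDisplacement hψ hbdd) := by
  refine continuous_iff_continuousAt.2 fun g₀ => Metric.tendsto_nhds.2 fun ε hε => ?_
  obtain ⟨V, hV, h1V, hψV⟩ := hψ (ε / 2) (half_pos hε)
  filter_upwards [(hV.preimage (continuous_const_mul g₀⁻¹)).mem_nhds (by simpa using h1V)]
    with g hg
  refine ((BoundedContinuousFunction.dist_le (half_pos hε).le).2 fun x => ?_).trans_lt
    (half_lt_self hε)
  rw [rightDisplacement_apply, rightDisplacement_apply, Real.dist_eq, sub_sub_sub_cancel_right,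
    abs_sub_comm]
  exact (hψV (x * g₀) (x * g) (by simpa [mul_assoc] using hg)).le

noncomputable def displacementAction (g : G) (f : G →ᵇ ℝ) : G →ᵇ ℝ :=
  f.compContinuous ⟨(· * g), continuous_mul_const g⟩ + rightDisplacement hψ hbdd g

lemma displacementAction_apply (g : G) (f : G →ᵇ ℝ) (x : G) :
    displacementAction hψ hbdd g f x = f (x * g) + (ψ (x * g) - ψ x) := rfl

lemma displacementAction_one (f : G →ᵇ ℝ) : displacementAction hψ hbdd 1 f = f := by
  ext x
  simp [displacementAction_apply]

lemma displacementAction_mul (g h : G) (f : G →ᵇ ℝ) :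
    displacementAction hψ hbdd (g * h) f =
      displacementAction hψ hbdd g (displacementAction hψ hbdd h f) := by
  ext x
  simp only [displacementAction_apply, mul_assoc]
  ring

lemma displacementAction_rightDisplacement (g h : G) :
    displacementAction hψ hbdd g (rightDisplacement hψ hbdd h) =
      rightDisplacement hψ hbdd (g * h) := by
  ext x
  simp only [displacementAction_apply, rightDisplacement_apply, mul_assoc]
  ring

lemma isometry_displacementAction (g : G) : Isometry (displacementAction hψ hbdd g) := by
  have hle : ∀ g f f', dist (displacementAction hψ hbdd g f) (displacementAction hψ hbdd g f')
      ≤ dist f f' := fun g f f' => (BoundedContinuousFunction.dist_le dist_nonneg).2 fun x => by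
    simpa only [displacementAction_apply, dist_add_right] using dist_coe_le_dist (x * g)
  refine Isometry.of_dist_eq fun f f' => (hle g f f').antisymm ?_
  simpa only [← displacementAction_mul, inv_mul_cancel, displacementAction_one]
    using hle g⁻¹ (displacementAction hψ hbdd g f) (displacementAction hψ hbdd g f')

theorem not_hasPropertyOB_of_leftUniformlyCts (hψ : LeftUniformlyCts ψ)
    (hbdd : ∀ g, ∃ C, ∀ x, |ψ (x * g) - ψ x| ≤ C) (hunb : ¬ ∃ C, ∀ g, |ψ g| ≤ C) :
    ¬ HasPropertyOB G := by
  intro hOB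
  set b := rightDisplacement hψ hbdd
  set A := displacementAction hψ hbdd
  have hAb : ∀ g h, A g (b h) = b (g * h) := displacementAction_rightDisplacement hψ hbdd
  -- Right translation is continuous only on left-uniformly continuous functions, so the action
  -- is restricted to the orbit `range b` of `b 1 = 0`.
  let ρ (g : G) (f : range b) : range b :=
    ⟨A g f, by
      obtain ⟨_, h, rfl⟩ := f
      exact ⟨g * h, (hAb g h).symm⟩⟩
  have hρ : ∀ g, Isometry (ρ g) := fun g =>
    Isometry.of_dist_eq fun f f' => (isometry_displacementAction hψ hbdd g).dist_eq f f'
  have hcont : Continuous fun p : G × range b => ρ p.1 p.2 := by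
    refine continuous_prod_of_continuous_lipschitzWith' _ 1 (fun g => (hρ g).lipschitz) ?_
    rintro ⟨_, h, rfl⟩
    exact Continuous.subtype_mk (((continuous_rightDisplacement hψ hbdd).comp
      (continuous_mul_const h)).congr fun g => (hAb g h).symm) _
  obtain ⟨C, hC⟩ := isBounded_iff.1 <| hOB (range b) ρ
    (fun f => Subtype.ext (displacementAction_one ..))
    (fun g h f => Subtype.ext (displacementAction_mul ..)) hρ hcont ⟨b 1, 1, rfl⟩
  refine hunb ⟨C + |ψ 1|, fun g => ?_⟩
  have hg : dist (b g) (b 1) ≤ C := by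
    have := hC ⟨g, rfl⟩ ⟨1, rfl⟩
    change dist (A g (b 1)) (A 1 (b 1)) ≤ C at this
    rwa [hAb, hAb, mul_one, mul_one] at this
  have := (dist_coe_le_dist (f := b g) (g := b 1) 1).trans hg
  rw [Real.dist_eq, rightDisplacement_apply, rightDisplacement_apply] at this
  simp only [one_mul, mul_one, sub_self, sub_zero] at this
  linarith [abs_sub_abs_le_abs_sub (ψ g) (ψ 1), abs_sub_comm (ψ g) (ψ 1)]

end RightTranslation

section CoveringLevel

variable {G : Type u} [Group G]

noncomputable def coveringLevel (W R : Set G) (x : G) : ℕ := sInf {k | x ∈ W ^ k * R}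

variable {W R : Set G}

lemma mem_pow_coveringLevel_mul (hcov : ∀ x, ∃ k, x ∈ W ^ k * R) (x : G) :
    x ∈ W ^ coveringLevel W R x * R :=
  Nat.sInf_mem (hcov x)

lemma coveringLevel_le {x : G} {k : ℕ} (hx : x ∈ W ^ k * R) : coveringLevel W R x ≤ k :=
  Nat.sInf_le hx

lemma coveringLevel_eq_zero {r : G} (hr : r ∈ R) : coveringLevel W R r = 0 :=
  Nat.le_zero.1 <| coveringLevel_le ⟨1, by simp, r, hr, one_mul r⟩

lemma exists_lt_coveringLevel (h1 : (1 : G) ∈ W) (hcov : ∀ x, ∃ k, x ∈ W ^ k * R) {k : ℕ}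
    (hk : W ^ k * R ≠ univ) : ∃ x, k < coveringLevel W R x := by
  obtain ⟨x, hx⟩ := ne_univ_iff_exists_notMem _ |>.1 hk
  exact ⟨x, not_le.1 fun hle => hx <|
    mul_subset_mul_right (pow_subset_pow_right h1 hle) (mem_pow_coveringLevel_mul hcov x)⟩

lemma coveringLevel_mul_le (hcov : ∀ x, ∃ k, x ∈ W ^ k * R) {g : G} {j : ℕ}
    (hg : R * {g} ⊆ W ^ j * R) (x : G) :
    coveringLevel W R (x * g) ≤ coveringLevel W R x + j := by
  refine coveringLevel_le ?_
  have hxg : x * g ∈ W ^ coveringLevel W R x * R * {g} :=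
    mul_mem_mul (mem_pow_coveringLevel_mul hcov x) rfl
  rw [mul_assoc] at hxg
  rw [pow_add, mul_assoc]
  exact mul_subset_mul_left hg hxg

lemma exists_mul_singleton_subset (h1 : (1 : G) ∈ W) (hR : R.Finite)
    (hcov : ∀ x, ∃ k, x ∈ W ^ k * R) (g : G) : ∃ j, R * {g} ⊆ W ^ j * R := by
  choose k hk using hcov
  refine ⟨hR.toFinset.sup fun r => k (r * g), ?_⟩
  rw [mul_singleton]
  rintro _ ⟨r, hr, rfl⟩
  exact mul_subset_mul_right (pow_subset_pow_right h1
    (Finset.le_sup (f := fun r => k (r * g)) (hR.mem_toFinset.2 hr))) (hk (r * g))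

lemma exists_coveringLevel_mul_le (h1 : (1 : G) ∈ W) (hR : R.Finite)
    (hcov : ∀ x, ∃ k, x ∈ W ^ k * R) (g : G) :
    ∃ j, ∀ x, coveringLevel W R (x * g) ≤ coveringLevel W R x + j ∧
      coveringLevel W R x ≤ coveringLevel W R (x * g) + j := by
  obtain ⟨j₁, hj₁⟩ := exists_mul_singleton_subset h1 hR hcov g
  obtain ⟨j₂, hj₂⟩ := exists_mul_singleton_subset h1 hR hcov g⁻¹
  refine ⟨j₁ + j₂, fun x => ⟨?_, ?_⟩⟩
  · linarith [coveringLevel_mul_le hcov hj₁ x]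
  · have := coveringLevel_mul_le hcov hj₂ (x * g)
    rw [mul_inv_cancel_right] at this
    omega

variable [TopologicalSpace G] [IsTopologicalGroup G] in
lemma eventually_mul_singleton_subset (hW : W ∈ 𝓝 1) (hR : R.Finite) :
    ∀ᶠ u in 𝓝 (1 : G), R * {u} ⊆ W ^ 1 * R := by
  have hconj : ∀ r : G, ∀ᶠ u in 𝓝 (1 : G), r * u * r⁻¹ ∈ W := fun r =>
    ((continuous_const_mul r).mul continuous_const).tendsto' 1 1 (by simp) hW
  filter_upwards [(Filter.eventually_all_finite hR).2 fun r _ => hconj r] with u hu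
  rw [mul_singleton]
  rintro _ ⟨r, hr, rfl⟩
  exact ⟨r * u * r⁻¹, by simpa using hu r hr, r, hr, by group⟩

lemma exists_mem_pow_of_mem_closure (hW : W⁻¹ = W) {x : G}
    (hx : x ∈ Subgroup.closure W) : ∃ k, x ∈ W ^ k := by
  induction hx using Subgroup.closure_induction_left with
  | one => exact ⟨0, by simp⟩
  | mul_left x hx y _ ih =>
    obtain ⟨k, hk⟩ := ih
    exact ⟨k + 1, pow_succ' W k ▸ mul_mem_mul hx hk⟩
  | inv_mul_cancel x hx y _ ih =>
    obtain ⟨k, hk⟩ := ih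
    exact ⟨k + 1, pow_succ' W k ▸ mul_mem_mul (hW ▸ inv_mem_inv.2 hx) hk⟩

lemma abs_sub_le_of_mem_pow {φ : G → ℝ} {V : Set G} {C : ℝ}
    (hV : ∀ a, ∀ v ∈ V, |φ (a * v) - φ a| ≤ C) {j : ℕ} {w : G} (hw : w ∈ V ^ j) (a : G) :
    |φ (a * w) - φ a| ≤ j * C := by
  induction j generalizing w with
  | zero => simp_all
  | succ n ih =>
    rw [pow_succ] at hw
    obtain ⟨z, hz, v, hv, rfl⟩ := hw
    have := abs_sub_le (φ (a * z * v)) (φ (a * z)) (φ a)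
    rw [← mul_assoc]
    push_cast
    linarith [ih hz, hV (a * z) v hv]

end CoveringLevel

section Implications

variable {G : Type u} [Group G] [TopologicalSpace G]

theorem BoundedTopGroup.exists_abs_le_of_leftUniformlyCts (hB : BoundedTopGroup G) {φ : G → ℝ}
    (hφ : LeftUniformlyCts φ) : ∃ C, ∀ g, |φ g| ≤ C := by
  obtain ⟨V, hV, h1, hφV⟩ := hφ 1 one_pos
  obtain ⟨F, hF, k, -, hFV⟩ := hB V hV h1
  obtain ⟨B, hB⟩ := (hF.image fun f => |φ f|).bddAbove
  refine ⟨B + k, fun g => ?_⟩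
  obtain ⟨f, hf, w, hw, rfl⟩ : g ∈ F * V ^ k := hFV ▸ mem_univ g
  show |φ (f * w)| ≤ B + k
  have hstep : ∀ a, ∀ v ∈ V, |φ (a * v) - φ a| ≤ 1 := fun a v hv => by
    rw [abs_sub_comm]
    exact (hφV a (a * v) (by simpa using hv)).le
  have hf : |φ f| ≤ B := hB (mem_image_of_mem _ hf)
  have hfw := abs_sub_le_of_mem_pow hstep hw f
  calc |φ (f * w)| = |(φ (f * w) - φ f) + φ f| := by rw [sub_add_cancel]
    _ ≤ |φ (f * w) - φ f| + |φ f| := abs_add_le _ _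
    _ ≤ B + k := by linarith

theorem hasPropertyOB_of_forall_leftUniformlyCts
    (h : ∀ φ : G → ℝ, LeftUniformlyCts φ → ∃ C, ∀ g, |φ g| ≤ C) : HasPropertyOB G := by
  intro X _ ρ h1 hmul hiso hcont x
  have hcx : Continuous fun g => ρ g x := hcont.comp (continuous_id.prodMk continuous_const)
  obtain ⟨C, hC⟩ := h (fun g => dist (ρ g x) x) fun ε hε =>
    ⟨(fun g => ρ g x) ⁻¹' ball x ε, isOpen_ball.preimage hcx, by simpa [h1] using hε,
      fun a b hab => by
        calc |dist (ρ a x) x - dist (ρ b x) x| ≤ dist (ρ a x) (ρ b x) := abs_dist_sub_le _ _ _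
          _ = dist (ρ a x) (ρ a (ρ (a⁻¹ * b) x)) := by rw [← hmul, mul_inv_cancel_left]
          _ = dist x (ρ (a⁻¹ * b) x) := (hiso a).dist_eq _ _
          _ < ε := by rw [dist_comm]; exact hab⟩
  exact isBounded_closedBall.subset <| range_subset_iff.2 fun g =>
    mem_closedBall.2 ((le_abs_self _).trans (hC g))

variable [IsTopologicalGroup G]

theorem index_ne_zero_of_forall_leftUniformlyCts [TopologicalSpace.SeparableSpace G]
    (h : ∀ φ : G → ℝ, LeftUniformlyCts φ → ∃ C, ∀ g, |φ g| ≤ C) {H : Subgroup G}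
    (hH : IsOpen (H : Set G)) : H.index ≠ 0 := by
  intro h0
  have : Infinite (G ⧸ H) := Subgroup.index_eq_zero_iff_infinite.1 h0
  have : DiscreteTopology (G ⧸ H) := QuotientGroup.discreteTopology hH
  have : Countable (G ⧸ H) := TopologicalSpace.separableSpace_iff_countable.1
    (QuotientGroup.isQuotientMap_mk H).separableSpace
  obtain ⟨e⟩ := nonempty_equiv_of_countable (α := G ⧸ H) (β := ℕ)
  obtain ⟨C, hC⟩ := h (fun g => e g) fun ε hε =>
    ⟨H, hH, H.one_mem, fun x y hxy => by simp [QuotientGroup.eq.2 hxy, hε]⟩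
  obtain ⟨g, hg⟩ := QuotientGroup.mk_surjective (e.symm (⌈C⌉₊ + 1))
  have := hC g
  simp only [hg, Equiv.apply_symm_apply, Nat.cast_add, Nat.cast_one] at this
  linarith [Nat.le_ceil C, le_abs_self ((⌈C⌉₊ : ℝ) + 1)]

theorem boundedTopGroup_of_forall_pow_mul_eq_univ
    (h : ∀ W : Set G, IsOpen W → (1 : G) ∈ W → W⁻¹ = W →
      ∃ R : Set G, R.Finite ∧ ∃ k, W ^ k * R = univ) : BoundedTopGroup G := by
  intro V hV h1
  obtain ⟨R, hR, k, hk⟩ := h (V ∩ V⁻¹) (hV.inter hV.inv) ⟨h1, by simpa⟩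
    (by rw [inter_inv, inv_inv, inter_comm])
  refine ⟨R⁻¹, hR.inv, k + 1, by omega, eq_univ_of_univ_subset ?_⟩
  calc univ = ((V ∩ V⁻¹) ^ k * R)⁻¹ := by rw [hk, inv_univ]
    _ = R⁻¹ * (V ∩ V⁻¹) ^ k := by rw [mul_inv_rev, ← inv_pow, inter_inv, inv_inv, inter_comm]
    _ ⊆ R⁻¹ * V ^ (k + 1) := mul_subset_mul_left <|
        (pow_subset_pow_left inter_subset_left).trans (pow_subset_pow_right h1 k.le_succ)

theorem exists_pow_mul_eq_univ_of_hasPropertyOB [FirstCountableTopology G]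
    (hOB : HasPropertyOB G) {W R : Set G} (hW : IsOpen W) (h1 : (1 : G) ∈ W) (hR : R.Finite)
    (hcov : ∀ x, ∃ k, x ∈ W ^ k * R) : ∃ k, W ^ k * R = univ := by
  by_contra! hne
  obtain ⟨-, -, -, r, hr, -⟩ := hcov 1
  obtain ⟨φ, hφ, hφm⟩ := exists_leftUniformlyCts_abs_sub_le_one (coveringLevel W R)
    (eventually_mul_singleton_subset (hW.mem_nhds h1) hR)
    (fun x u hu => coveringLevel_mul_le hcov hu x) ⟨r, coveringLevel_eq_zero hr⟩
  refine not_hasPropertyOB_of_leftUniformlyCts hφ (fun g => ?_) (fun ⟨C, hC⟩ => ?_) hOB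
  · obtain ⟨j, hj⟩ := exists_coveringLevel_mul_le h1 hR hcov g
    refine ⟨j + 2, fun x => ?_⟩
    have h₁ := abs_le.1 (hφm (x * g))
    have h₂ := abs_le.1 (hφm x)
    have h₃ : (coveringLevel W R (x * g) : ℝ) ≤ coveringLevel W R x + j := by
      exact_mod_cast (hj x).1
    have h₄ : (coveringLevel W R x : ℝ) ≤ coveringLevel W R (x * g) + j := by
      exact_mod_cast (hj x).2
    rw [abs_le]
    constructor <;> linarith
  · obtain ⟨x, hx⟩ := exists_lt_coveringLevel h1 hcov (hne (⌈C⌉₊ + 1))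
    have : (⌈C⌉₊ : ℝ) + 2 ≤ coveringLevel W R x := by exact_mod_cast hx
    linarith [Nat.le_ceil C, hC x, le_abs_self (φ x), (abs_le.1 (hφm x)).1]

theorem boundedTopGroup_of_hasPropertyOB [FirstCountableTopology G] (hOB : HasPropertyOB G)
    (hidx : ∀ H : Subgroup G, IsOpen (H : Set G) → H.index ≠ 0) : BoundedTopGroup G := by
  refine boundedTopGroup_of_forall_pow_mul_eq_univ fun W hW h1 hWinv => ?_
  set H := Subgroup.closure W
  have hH : IsOpen (H : Set G) :=
    H.isOpen_of_mem_nhds (g := 1) (mem_of_superset (hW.mem_nhds h1) Subgroup.subset_closure)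
  have : H.FiniteIndex := ⟨hidx H hH⟩
  refine ⟨range fun q : G ⧸ H => q.out⁻¹, finite_range _,
    exists_pow_mul_eq_univ_of_hasPropertyOB hOB hW h1 (finite_range _) fun x => ?_⟩
  set q : G ⧸ H := QuotientGroup.mk x⁻¹
  obtain ⟨k, hk⟩ := exists_mem_pow_of_mem_closure hWinv
    (inv_mem (QuotientGroup.eq.1 (QuotientGroup.out_eq' q)) : (q.out⁻¹ * x⁻¹)⁻¹ ∈ H)
  exact ⟨k, _, hk, q.out⁻¹, ⟨q, rfl⟩, by group⟩

end Implications

/-- For a Polish group `G` the following are equivalent: (1) `G` is bounded;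
(2) every left-uniformly continuous `φ : G → ℝ` is bounded; (3) `G` has property (OB) and every
open subgroup of `G` has finite index. -/
theorem statement2 (G : Type u) [Group G] [TopologicalSpace G] [IsTopologicalGroup G]
    [PolishSpace G] :
    (BoundedTopGroup G ↔ ∀ φ : G → ℝ, LeftUniformlyCts φ → ∃ C : ℝ, ∀ g : G, |φ g| ≤ C) ∧
    (BoundedTopGroup G ↔
      (HasPropertyOB G ∧ ∀ H : Subgroup G, IsOpen (H : Set G) → H.index ≠ 0)) := by
  have h12 : BoundedTopGroup G → ∀ φ : G → ℝ, LeftUniformlyCts φ → ∃ C : ℝ, ∀ g, |φ g| ≤ C :=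
    fun hB _ hφ => hB.exists_abs_le_of_leftUniformlyCts hφ
  have h23 : (∀ φ : G → ℝ, LeftUniformlyCts φ → ∃ C : ℝ, ∀ g, |φ g| ≤ C) →
      HasPropertyOB G ∧ ∀ H : Subgroup G, IsOpen (H : Set G) → H.index ≠ 0 := fun h =>
    ⟨hasPropertyOB_of_forall_leftUniformlyCts h,
      fun _ hH => index_ne_zero_of_forall_leftUniformlyCts h hH⟩
  have h31 : HasPropertyOB G ∧ (∀ H : Subgroup G, IsOpen (H : Set G) → H.index ≠ 0) →
      BoundedTopGroup G := fun h => boundedTopGroup_of_hasPropertyOB h.1 h.2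
  exact ⟨⟨h12, h31 ∘ h23⟩, ⟨h23 ∘ h12, h31⟩⟩
end

section
/- A Polish group G is Roelcke precompact if and only if for every n ≥ 1 and every open neighbourhood V of the identity there is a finite set F ⊆ G such that for all g₁,…,gₙ ∈ G there exist v ∈ V, f₁,…,fₙ ∈ F and v₁,…,vₙ ∈ V with gᵢ = v fᵢ vᵢ for all i = 1,…,n. -/
open Pointwise

/-- A topological group `G` is Roelcke precompact if for every open neighbourhood `V` of the
identity there is a finite set `F ⊆ G` with `G = V F V`. -/
def RoelckePrecompact (G : Type*) [Group G] [TopologicalSpace G] : Prop :=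
  ∀ V : Set G, IsOpen V → (1 : G) ∈ V → ∃ F : Set G, F.Finite ∧ V * F * V = Set.univ

open Topology

/-!
Induction on `n`, the case `n = 1` being the definition. Choose an open `U ∋ 1` with `U U ⊆ V`
and write the first `n` coordinates as `gᵢ = v fᵢ wᵢ` with `v, wᵢ ∈ U` and `fᵢ ∈ F`. Then write
`v⁻¹ gₙ = u f u'` with `u, u' ∈ C` and `f ∈ F'`, where `C F' C = G`. Replacing the common left
factor `v` by `v u` costs the right factors `fᵢ⁻¹ u⁻¹ fᵢ`; as only finitely many `fᵢ` occur, the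
neighbourhood `C` can be chosen so small that these lie in `U`.
-/

section

variable {G : Type*} [Group G]

def SimultaneouslyCovers (V F : Set G) (n : ℕ) : Prop :=
  ∀ g : Fin n → G, ∃ v ∈ V, ∃ f : Fin n → G, (∀ i, f i ∈ F) ∧
    ∃ w : Fin n → G, (∀ i, w i ∈ V) ∧ ∀ i, g i = v * f i * w i

theorem simultaneouslyCovers_zero {V : Set G} (hV : (1 : G) ∈ V) (F : Set G) :
    SimultaneouslyCovers V F 0 :=
  fun _ => ⟨1, hV, Fin.elim0, Fin.rec0, Fin.elim0, Fin.rec0, Fin.rec0⟩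

theorem simultaneouslyCovers_one_iff {V F : Set G} :
    SimultaneouslyCovers V F 1 ↔ V * F * V = Set.univ := by
  refine ⟨fun h => Set.eq_univ_of_forall fun g => ?_, fun h g => ?_⟩
  · obtain ⟨v, hv, f, hf, w, hw, hg⟩ := h fun _ => g
    rw [hg 0]
    exact Set.mul_mem_mul (Set.mul_mem_mul hv (hf 0)) (hw 0)
  · obtain ⟨_, ⟨v, hv, f, hf, rfl⟩, w, hw, hg⟩ := h.symm ▸ Set.mem_univ (g 0)
    exact ⟨v, hv, fun _ => f, fun _ => hf, fun _ => w, fun _ => hw,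
      fun i => by rw [Subsingleton.elim i 0]; exact hg.symm⟩

theorem SimultaneouslyCovers.succ {U V F F' C : Set G} {n : ℕ} (hU : (1 : G) ∈ U)
    (hUV : U * U ⊆ V) (hF : SimultaneouslyCovers U F n) (hCU : C ⊆ U)
    (hCF : ∀ u ∈ C, ∀ f ∈ F, f⁻¹ * u⁻¹ * f ∈ U) (hF' : C * F' * C = Set.univ) :
    SimultaneouslyCovers V (F ∪ F') (n + 1) := by
  intro g
  have hUV' : U ⊆ V := (Set.subset_mul_left U hU).trans hUV
  obtain ⟨v, hv, f, hf, w, hw, hg⟩ := hF (Fin.init g)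
  obtain ⟨u, hu, f', hf', u', hu', hlast⟩ :=
    simultaneouslyCovers_one_iff.2 hF' fun _ => v⁻¹ * g (Fin.last n)
  refine ⟨v * u, hUV (Set.mul_mem_mul hv (hCU hu)), Fin.snoc f (f' 0), ?_,
    Fin.snoc (fun i => (f i)⁻¹ * u⁻¹ * f i * w i) (u' 0), ?_, ?_⟩ <;>
    simp only [Fin.forall_fin_succ', Fin.snoc_castSucc, Fin.snoc_last]
  · exact ⟨fun i => Or.inl (hf i), Or.inr (hf' 0)⟩
  · exact ⟨fun i => hUV (Set.mul_mem_mul (hCF _ hu _ (hf i)) (hw i)), hUV' (hCU (hu' 0))⟩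
  · refine ⟨fun i => ?_, ?_⟩
    · rw [show g i.castSucc = v * f i * w i from hg i]
      group
    · rw [← mul_inv_cancel_left v (g (Fin.last n)), hlast 0]
      group

end

section

variable {G : Type*} [Group G] [TopologicalSpace G] [IsTopologicalGroup G]

theorem eventually_forall_conj_inv_mem {U : Set G} (hU : U ∈ 𝓝 (1 : G)) {F : Set G}
    (hF : F.Finite) : ∀ᶠ u in 𝓝 (1 : G), ∀ f ∈ F, f⁻¹ * u⁻¹ * f ∈ U := by
  refine (Filter.eventually_all_finite hF).2 fun f _ => ?_
  have hconj : Continuous fun u : G => f⁻¹ * u⁻¹ * f := by fun_prop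
  exact hconj.tendsto' 1 1 (by group) hU

theorem RoelckePrecompact.simultaneouslyCovers (h : RoelckePrecompact G) (n : ℕ) {V : Set G}
    (hVo : IsOpen V) (hV : (1 : G) ∈ V) :
    ∃ F : Set G, F.Finite ∧ SimultaneouslyCovers V F n := by
  induction n generalizing V with
  | zero => exact ⟨∅, Set.finite_empty, simultaneouslyCovers_zero hV ∅⟩
  | succ n ih =>
    obtain ⟨U, hUo, hU, hUV⟩ := exists_open_nhds_one_mul_subset (hVo.mem_nhds hV)
    obtain ⟨F, hFfin, hF⟩ := ih hUo hU
    obtain ⟨C, hC, hCo, hC1⟩ := mem_nhds_iff.1 <|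
      Filter.inter_mem (hUo.mem_nhds hU) (eventually_forall_conj_inv_mem (hUo.mem_nhds hU) hFfin)
    obtain ⟨F', hF'fin, hF'⟩ := h C hCo hC1
    exact ⟨F ∪ F', hFfin.union hF'fin,
      hF.succ hU hUV (fun u hu => (hC hu).1) (fun u hu => (hC hu).2) hF'⟩

end

theorem statement4_general (G : Type*) [Group G] [TopologicalSpace G] [IsTopologicalGroup G] :
    RoelckePrecompact G ↔
      ∀ n : ℕ, 1 ≤ n → ∀ V : Set G, IsOpen V → (1 : G) ∈ V →
        ∃ F : Set G, F.Finite ∧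
          ∀ g : Fin n → G, ∃ v ∈ V, ∃ f : Fin n → G, (∀ i, f i ∈ F) ∧
            ∃ w : Fin n → G, (∀ i, w i ∈ V) ∧ ∀ i, g i = v * f i * w i := by
  refine ⟨fun h n _ V hVo hV => h.simultaneouslyCovers n hVo hV, fun h V hVo hV => ?_⟩
  obtain ⟨F, hFfin, hF⟩ := h 1 le_rfl V hVo hV
  exact ⟨F, hFfin, simultaneouslyCovers_one_iff.1 hF⟩

/-- A Polish group `G` is Roelcke precompact if and only if for every `n ≥ 1`
and every open neighbourhood `V` of the identity there is a finite set `F ⊆ G` such that for all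
`g₁, …, gₙ ∈ G` there exist `v ∈ V`, `f₁, …, fₙ ∈ F` and `v₁, …, vₙ ∈ V` with `gᵢ = v fᵢ vᵢ`
for all `i = 1, …, n`. -/
theorem statement4 (G : Type*) [Group G] [TopologicalSpace G] [IsTopologicalGroup G]
    [PolishSpace G] :
    RoelckePrecompact G ↔
      ∀ n : ℕ, 1 ≤ n → ∀ V : Set G, IsOpen V → (1 : G) ∈ V →
        ∃ F : Set G, F.Finite ∧
          ∀ g : Fin n → G, ∃ v ∈ V, ∃ f : Fin n → G, (∀ i, f i ∈ F) ∧
            ∃ w : Fin n → G, (∀ i, w i ∈ V) ∧ ∀ i, g i = v * f i * w i :=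
  statement4_general G
end

section
/- Let G be a Roelcke precompact Polish group acting continuously by isometries on a metric space (X,d) with a dense orbit. Then for every open neighbourhood U of the identity, every ε > 0 and every n ≥ 1 there is a finite set A ⊆ Xⁿ such that U·A is ε-dense in Xⁿ with respect to the supremum metric d_∞, where G acts diagonally on Xⁿ and d_∞((x₁,…,xₙ),(y₁,…,yₙ)) = max_i d(xᵢ,yᵢ). -/
/-!
Induction on `n`, adding one coordinate at a time. Roelcke precompactness and a dense orbit
`G • x₀` give, for each neighbourhood `V` of `1`, a finite `F ⊆ G` with `V • F • x₀` dense up to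
`ε`. An approximation of the remaining coordinates is then chosen for a neighbourhood of `1`
small enough to move each of the finitely many points `f • x₀` only slightly.
-/

open Pointwise

def HasFiniteLocalNets (G Y : Type*) [Group G] [TopologicalSpace G] [SMul G Y]
    [PseudoMetricSpace Y] : Prop :=
  ∀ U : Set G, IsOpen U → (1 : G) ∈ U → ∀ ε : ℝ, 0 < ε →
    ∃ A : Set Y, A.Finite ∧ ∀ y : Y, ∃ g ∈ U, ∃ a ∈ A, dist (g • a) y ≤ ε

section

variable {G X Y Z : Type*} [TopologicalSpace G]

theorem isOpen_setOf_dist_smul_lt [PseudoMetricSpace X] [SMul G X] [ContinuousSMul G X]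
    (x : X) (δ : ℝ) : IsOpen {g : G | dist (g • x) x < δ} :=
  isOpen_lt ((continuous_id.smul continuous_const).dist continuous_const) continuous_const

variable [Group G]

/-- Write a point near `y` in the dense orbit as `(v * f * w) • x₀` with `v, w ∈ V` and `f ∈ F`;
shrinking `V` so that `w` barely moves `x₀` makes `v • f • x₀` close to `y`. -/
theorem RoelckePrecompact.exists_finite_dist_smul_smul_lt (hRP : RoelckePrecompact G)
    [PseudoMetricSpace X] [MulAction G X] [ContinuousSMul G X] [IsIsometricSMul G X] {x₀ : X}
    (hx₀ : Dense (Set.range fun g : G => g • x₀)) {V : Set G} (hV : IsOpen V) (h1V : (1 : G) ∈ V)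
    {δ : ℝ} (hδ : 0 < δ) :
    ∃ F : Set G, F.Finite ∧ ∀ y : X, ∃ v ∈ V, ∃ f ∈ F, dist (v • f • x₀) y < δ := by
  obtain ⟨F, hF, hVFV⟩ := hRP (V ∩ {g | dist (g • x₀) x₀ < δ / 2})
    (hV.inter (isOpen_setOf_dist_smul_lt x₀ _)) ⟨h1V, by simpa using half_pos hδ⟩
  refine ⟨F, hF, fun y => ?_⟩
  obtain ⟨_, ⟨g, rfl⟩, hgy⟩ := hx₀.exists_dist_lt y (half_pos hδ)
  obtain ⟨_, ⟨v, hv, f, hf, rfl⟩, w, hw, rfl⟩ := hVFV ▸ Set.mem_univ g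
  refine ⟨v, hv.1, f, hf, ?_⟩
  have hw' : dist (v • f • x₀) ((v * f * w) • x₀) < δ / 2 := by
    rw [mul_smul, mul_smul, dist_smul, dist_smul, dist_comm]
    exact hw.2
  calc dist (v • f • x₀) y
      ≤ dist (v • f • x₀) ((v * f * w) • x₀) + dist ((v * f * w) • x₀) y := dist_triangle _ _ _
    _ < δ / 2 + δ / 2 := add_lt_add hw' (by rwa [dist_comm])
    _ = δ := add_halves δ

theorem Fin.isometry_cons [PseudoEMetricSpace X] {n : ℕ} :
    Isometry fun p : X × (Fin n → X) => (Fin.cons p.1 p.2 : Fin (n + 1) → X) :=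
  fun _ _ => by simp [edist_pi_def, Fin.univ_succ, Prod.edist_eq, Function.comp_def]

namespace HasFiniteLocalNets

theorem of_finite [MulAction G Y] [PseudoMetricSpace Y] [Finite Y] : HasFiniteLocalNets G Y :=
  fun _ _ h1U _ hε =>
    ⟨Set.univ, Set.finite_univ, fun y => ⟨1, h1U, y, trivial, by simpa using hε.le⟩⟩

theorem of_surjective [SMul G Y] [SMul G Z] [PseudoMetricSpace Y] [PseudoMetricSpace Z]
    (hY : HasFiniteLocalNets G Y) (e : Y →[G] Z) (he : Isometry e)
    (hsurj : Function.Surjective e) : HasFiniteLocalNets G Z := by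
  intro U hU h1U ε hε
  obtain ⟨A, hA, hAU⟩ := hY U hU h1U ε hε
  refine ⟨e '' A, hA.image e, fun z => ?_⟩
  obtain ⟨y, rfl⟩ := hsurj z
  obtain ⟨g, hg, a, ha, hay⟩ := hAU y
  exact ⟨g, hg, e a, Set.mem_image_of_mem e ha, by rwa [← map_smul, he.dist_eq]⟩

theorem prod [IsTopologicalGroup G] (hRP : RoelckePrecompact G) [PseudoMetricSpace X]
    [MulAction G X] [ContinuousSMul G X] [IsIsometricSMul G X] {x₀ : X}
    (hx₀ : Dense (Set.range fun g : G => g • x₀)) [PseudoMetricSpace Y] [MulAction G Y]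
    [IsIsometricSMul G Y] (hY : HasFiniteLocalNets G Y) : HasFiniteLocalNets G (X × Y) := by
  intro U hU h1U ε hε
  obtain ⟨W, hW, h1W, hWW⟩ := exists_open_nhds_one_mul_subset (hU.mem_nhds h1U)
  obtain ⟨F, hF, hFW⟩ := hRP.exists_finite_dist_smul_smul_lt hx₀ hW h1W (half_pos hε)
  set W' := W ∩ ⋂ f ∈ F, {h : G | dist (h • f • x₀) (f • x₀) < ε / 2}
  have hW' : IsOpen W' :=
    hW.inter (hF.isOpen_biInter fun f _ => isOpen_setOf_dist_smul_lt _ _)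
  have h1W' : (1 : G) ∈ W' := ⟨h1W, Set.mem_iInter₂.2 fun f _ => by simpa using half_pos hε⟩
  obtain ⟨B, hB, hBW'⟩ := hY W' hW' h1W' ε hε
  refine ⟨(fun p : G × Y => (p.1 • x₀, p.2)) '' F ×ˢ B, (hF.prod hB).image _, fun ⟨x, y⟩ => ?_⟩
  obtain ⟨v, hv, f, hf, hfx⟩ := hFW x
  obtain ⟨h, hh, b, hb, hby⟩ := hBW' (v⁻¹ • y)
  refine ⟨v * h, hWW (Set.mul_mem_mul hv hh.1), (f • x₀, b), ⟨(f, b), ⟨hf, hb⟩, rfl⟩, ?_⟩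
  rw [Prod.dist_eq]
  refine max_le ?_ ?_
  · show dist ((v * h) • f • x₀) x ≤ ε
    have hhf : dist ((v * h) • f • x₀) (v • f • x₀) ≤ ε / 2 := by
      rw [mul_smul, dist_smul]
      exact (Set.mem_iInter₂.1 hh.2 f hf).le
    calc dist ((v * h) • f • x₀) x
        ≤ dist ((v * h) • f • x₀) (v • f • x₀) + dist (v • f • x₀) x := dist_triangle _ _ _
      _ ≤ ε / 2 + ε / 2 := add_le_add hhf hfx.le
      _ = ε := add_halves ε
  · show dist ((v * h) • b) y ≤ ε
    rwa [mul_smul, ← dist_smul v⁻¹, inv_smul_smul]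

theorem fin_succ [IsTopologicalGroup G] (hRP : RoelckePrecompact G) [PseudoMetricSpace X]
    [MulAction G X] [ContinuousSMul G X] [IsIsometricSMul G X] {x₀ : X}
    (hx₀ : Dense (Set.range fun g : G => g • x₀)) {n : ℕ}
    (hn : HasFiniteLocalNets G (Fin n → X)) : HasFiniteLocalNets G (Fin (n + 1) → X) :=
  (hn.prod hRP hx₀).of_surjective
    ⟨fun p => Fin.cons p.1 p.2, fun _ _ => funext (Fin.cases rfl fun _ => rfl)⟩
    Fin.isometry_cons
    (Fin.consEquiv fun _ => X).surjective

end HasFiniteLocalNets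

end

theorem statement5_general {G : Type*} [Group G] [TopologicalSpace G] [IsTopologicalGroup G]
    {X : Type*} [MetricSpace X] [MulAction G X]
    (hRP : RoelckePrecompact G)
    (hcont : Continuous fun p : G × X => p.1 • p.2)
    (hiso : ∀ g : G, Isometry fun x : X => g • x)
    (hdense : ∃ x : X, Dense (Set.range fun g : G => g • x)) :
    ∀ U : Set G, IsOpen U → (1 : G) ∈ U → ∀ ε : ℝ, 0 < ε → ∀ n : ℕ, 1 ≤ n →
      ∃ A : Set (Fin n → X), A.Finite ∧
        ∀ y : Fin n → X, ∃ g ∈ U, ∃ a ∈ A, dist (fun i => g • a i) y ≤ ε := by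
  obtain ⟨x₀, hx₀⟩ := hdense
  have : ContinuousSMul G X := ⟨hcont⟩
  have : IsIsometricSMul G X := ⟨hiso⟩
  have hnets : ∀ n, HasFiniteLocalNets G (Fin n → X) := by
    intro n
    induction n with
    | zero => exact .of_finite
    | succ n ih => exact ih.fin_succ hRP hx₀
  intro U hU h1U ε hε n _
  exact hnets n U hU h1U ε hε

/-- Let `G` be a Roelcke precompact Polish group acting continuously by
isometries on a metric space `(X, d)` with a dense orbit. Then for every open neighbourhood `U`
of `1`, every `ε > 0` and every `n ≥ 1` there is a finite set `A ⊆ Xⁿ` such that `U·A` is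
`ε`-dense in `Xⁿ` for the supremum metric (which is the metric on `Fin n → X`), `G` acting
diagonally on `Xⁿ`. -/
theorem statement5 {G : Type*} [Group G] [TopologicalSpace G] [IsTopologicalGroup G] [PolishSpace G]
    {X : Type*} [MetricSpace X] [MulAction G X]
    (hRP : RoelckePrecompact G)
    (hcont : Continuous fun p : G × X => p.1 • p.2)
    (hiso : ∀ g : G, Isometry fun x : X => g • x)
    (hdense : ∃ x : X, Dense (Set.range fun g : G => g • x)) :
    ∀ U : Set G, IsOpen U → (1 : G) ∈ U → ∀ ε : ℝ, 0 < ε → ∀ n : ℕ, 1 ≤ n →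
      ∃ A : Set (Fin n → X), A.Finite ∧
        ∀ y : Fin n → X, ∃ g ∈ U, ∃ a ∈ A, dist (fun i => g • a i) y ≤ ε :=
  statement5_general hRP hcont hiso hdense
end

section
/- Let G be a Polish group and suppose there is an open subgroup V ≤ G such that for every finite set F ⊆ G and every k ≥ 1, G ≠ (VF)^k (the set of products of k elements of VF). Then there is a countable metric space (X,d) with d(x,y) ≥ 1 for all distinct x, y ∈ X, and a transitive continuous action of G by isometries on X such that X has infinite diameter. -/
/-!
Since `G` is separable and `V` is open, `G ⧸ V` is countable; enumerate it as `(u n) V`.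
With `Fₙ = {1} ∪ {u i, (u i)⁻¹ | i ≤ n}`, the sets `Bₙ = V (V Fₙ V)ⁿ` are symmetric,
exhaust `G` and satisfy `Bₘ Bₙ ⊆ Bₘ₊ₙ`, `B₀ = V`. So `ℓ g = min {n | g ∈ Bₙ}` is an
integer-valued group seminorm vanishing exactly on `V`, and `d(aV, bV) = ℓ (a⁻¹ b)` is a
left-invariant metric on `G ⧸ V` whose nonzero values are `≥ 1`. As `Bₙ ⊆ (V Fₙ)²ⁿ⁺¹`, a bound
on `ℓ` would give `G = (V F)ᵏ` for a finite `F`.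
-/

open Pointwise

namespace RelativeWordLength

variable {G : Type*} [Group G] (V : Subgroup G) (u : ℕ → G)

def letters (n : ℕ) : Set G := insert 1 (u '' Set.Iic n ∪ (u '' Set.Iic n)⁻¹)

def step (n : ℕ) : Set G := (V : Set G) * letters u n * V

def ball (n : ℕ) : Set G := (V : Set G) * step V u n ^ n

noncomputable def length (g : G) : ℕ := sInf {n | g ∈ ball V u n}

variable {V u}

lemma one_mem_letters (n : ℕ) : (1 : G) ∈ letters u n := Set.mem_insert _ _

lemma inv_letters (n : ℕ) : (letters u n)⁻¹ = letters u n := by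
  rw [letters, Set.inv_insert, inv_one, Set.union_inv, inv_inv, Set.union_comm]

lemma letters_mono : Monotone (letters u) := fun m n hmn => by
  have h : u '' Set.Iic m ⊆ u '' Set.Iic n := Set.image_mono (Set.Iic_subset_Iic.mpr hmn)
  exact Set.insert_subset_insert (Set.union_subset_union h (Set.inv_subset_inv.mpr h))

lemma letters_finite (n : ℕ) : (letters u n).Finite :=
  have h := (Set.finite_Iic n).image u
  (h.union h.inv).insert 1

lemma subgroup_mul_step (n : ℕ) : (V : Set G) * step V u n = step V u n := by
  rw [step, ← mul_assoc, ← mul_assoc, coe_mul_coe]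

lemma step_mul_subgroup (n : ℕ) : step V u n * V = step V u n := by
  rw [step, mul_assoc, coe_mul_coe]

lemma inv_step (n : ℕ) : (step V u n)⁻¹ = step V u n := by
  rw [step, mul_inv_rev, mul_inv_rev, inv_letters, inv_coe_set, mul_assoc]

lemma one_mem_step (n : ℕ) : (1 : G) ∈ step V u n :=
  ⟨1, ⟨1, V.one_mem, 1, one_mem_letters n, one_mul 1⟩, 1, V.one_mem, one_mul 1⟩

lemma step_mono : Monotone (step V u) := fun _ _ hmn =>
  Set.mul_subset_mul_right (Set.mul_subset_mul_left (letters_mono hmn))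

lemma step_subset_sq (n : ℕ) : step V u n ⊆ ((V : Set G) * letters u n) ^ 2 := by
  rw [step, pow_two]
  exact Set.mul_subset_mul_left (Set.subset_mul_left _ (one_mem_letters (u := u) n))

lemma ball_zero : ball V u 0 = V := by rw [ball, pow_zero, mul_one]

lemma ball_mono : Monotone (ball V u) := fun _ n hmn =>
  Set.mul_subset_mul_left ((Set.pow_subset_pow_left (step_mono hmn)).trans
    (Set.pow_subset_pow_right (one_mem_step n) hmn))

lemma commute_subgroup_step_pow (m n : ℕ) : Commute (V : Set G) (step V u m ^ n) :=
  (show Commute (V : Set G) (step V u m) from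
    (subgroup_mul_step m).trans (step_mul_subgroup m).symm).pow_right n

lemma ball_mul_ball (m n : ℕ) : ball V u m * ball V u n ⊆ ball V u (m + n) :=
  calc ball V u m * ball V u n = V * (step V u m ^ m * V) * step V u n ^ n := by
        simp only [ball, mul_assoc]
    _ = V * step V u m ^ m * step V u n ^ n := by
        rw [← (commute_subgroup_step_pow m m).eq, ← mul_assoc, coe_mul_coe]
    _ ⊆ V * step V u (m + n) ^ m * step V u (m + n) ^ n := by
        gcongr <;> exact step_mono (by omega)
    _ = ball V u (m + n) := by rw [ball, pow_add, mul_assoc]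

lemma inv_ball (n : ℕ) : (ball V u n)⁻¹ = ball V u n := by
  rw [ball, mul_inv_rev, ← inv_pow, inv_step, inv_coe_set, (commute_subgroup_step_pow n n).eq]

lemma ball_subset_pow (n : ℕ) : ball V u n ⊆ ((V : Set G) * letters u n) ^ (2 * n + 1) := by
  rw [ball, pow_succ', pow_mul]
  exact Set.mul_subset_mul (Set.subset_mul_left _ (one_mem_letters n))
    (Set.pow_subset_pow_left (step_subset_sq n))

lemma step_subset_ball_succ (n : ℕ) : step V u n ⊆ ball V u (n + 1) :=
  calc step V u n ⊆ step V u (n + 1) ^ 1 := by rw [pow_one]; exact step_mono n.le_succ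
    _ ⊆ step V u (n + 1) ^ (n + 1) := Set.pow_subset_pow_right (one_mem_step _) (by omega)
    _ ⊆ ball V u (n + 1) := Set.subset_mul_right _ V.one_mem

variable (hu : Function.Surjective fun n => (u n : G ⧸ V))
include hu

lemma exists_mem_ball (g : G) : ∃ n, g ∈ ball V u n := by
  obtain ⟨n, hn⟩ := hu g
  refine ⟨n + 1, step_subset_ball_succ n ⟨u n, ?_, (u n)⁻¹ * g, QuotientGroup.eq.1 hn, by group⟩⟩
  exact ⟨1, V.one_mem, u n, Or.inr (Or.inl ⟨n, Set.mem_Iic.2 le_rfl, rfl⟩), one_mul _⟩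

lemma length_le_iff {g : G} {n : ℕ} : length V u g ≤ n ↔ g ∈ ball V u n :=
  ⟨fun h => ball_mono h (Nat.sInf_mem (exists_mem_ball hu g)), fun h => Nat.sInf_le h⟩

lemma mem_ball_length (g : G) : g ∈ ball V u (length V u g) := (length_le_iff hu).1 le_rfl

lemma length_mul_le (a b : G) : length V u (a * b) ≤ length V u a + length V u b :=
  (length_le_iff hu).2
    (ball_mul_ball _ _ (Set.mul_mem_mul (mem_ball_length hu a) (mem_ball_length hu b)))

lemma length_eq_zero_iff {g : G} : length V u g = 0 ↔ g ∈ V := by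
  rw [← Nat.le_zero, length_le_iff hu, ball_zero, SetLike.mem_coe]

lemma exists_lt_length
    (hbig : ∀ F : Set G, F.Finite → ∀ k : ℕ, 1 ≤ k → ((V : Set G) * F) ^ k ≠ Set.univ) (N : ℕ) :
    ∃ g, N < length V u g := by
  by_contra! h
  exact hbig (letters u N) (letters_finite N) (2 * N + 1) (by omega)
    (Set.eq_univ_of_forall fun g => ball_subset_pow N ((length_le_iff hu).1 (h g)))

omit hu in
lemma length_inv (g : G) : length V u g⁻¹ = length V u g := by
  simp only [length, ← Set.mem_inv, inv_ball]

noncomputable def seminorm : GroupSeminorm G where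
  toFun g := length V u g
  map_one' := by simp [(length_eq_zero_iff hu).2 V.one_mem]
  mul_le' a b := by exact_mod_cast length_mul_le hu a b
  inv' g := by simp only [length_inv]

lemma seminorm_eq_zero_iff (g : G) : seminorm hu g = 0 ↔ g ∈ V :=
  Nat.cast_eq_zero.trans (length_eq_zero_iff hu)

lemma one_le_seminorm {g : G} (hg : g ∉ V) : 1 ≤ seminorm hu g :=
  Nat.one_le_cast.2 (Nat.one_le_iff_ne_zero.2 fun h => hg ((length_eq_zero_iff hu).1 h))

lemma exists_lt_seminorm
    (hbig : ∀ F : Set G, F.Finite → ∀ k : ℕ, 1 ≤ k → ((V : Set G) * F) ^ k ≠ Set.univ) (C : ℝ) :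
    ∃ g, C < seminorm hu g := by
  obtain ⟨N, hN⟩ := exists_nat_ge C
  obtain ⟨g, hg⟩ := exists_lt_length hu hbig N
  exact ⟨g, hN.trans_lt (Nat.cast_lt.2 hg)⟩

end RelativeWordLength

namespace GroupSeminorm

variable {G : Type*} [Group G] (f : GroupSeminorm G)

lemma map_mul_of_map_eq_zero_left {v : G} (hv : f v = 0) (g : G) : f (v * g) = f g :=
  le_antisymm (by simpa [hv] using map_mul_le_add f v g)
    (by simpa [hv] using map_mul_le_add f v⁻¹ (v * g))

lemma map_mul_of_map_eq_zero_right {v : G} (hv : f v = 0) (g : G) : f (g * v) = f g :=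
  le_antisymm (by simpa [hv] using map_mul_le_add f g v)
    (by simpa [hv] using map_mul_le_add f (g * v) v⁻¹)

variable {V : Subgroup G} (hf : ∀ g, f g = 0 ↔ g ∈ V)
include hf

def cosetDist : G ⧸ V → G ⧸ V → ℝ := fun x y =>
  Quotient.liftOn₂' x y (fun a b => f (a⁻¹ * b)) fun a₁ a₂ b₁ b₂ h₁ h₂ => by
    rw [QuotientGroup.leftRel_apply] at h₁ h₂
    have hb : b₁⁻¹ * b₂ = (a₁⁻¹ * b₁)⁻¹ * (a₁⁻¹ * a₂) * (a₂⁻¹ * b₂) := by group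
    rw [hb, map_mul_of_map_eq_zero_right f ((hf _).2 h₂),
      map_mul_of_map_eq_zero_left f ((hf _).2 (V.inv_mem h₁))]

lemma cosetDist_mk (a b : G) : cosetDist f hf a b = f (a⁻¹ * b) := rfl

@[reducible] def cosetMetricSpace : MetricSpace (G ⧸ V) where
  dist := cosetDist f hf
  dist_self x := by
    obtain ⟨a, rfl⟩ := QuotientGroup.mk_surjective x
    rw [cosetDist_mk, inv_mul_cancel, map_one_eq_zero]
  dist_comm x y := by
    obtain ⟨a, rfl⟩ := QuotientGroup.mk_surjective x
    obtain ⟨b, rfl⟩ := QuotientGroup.mk_surjective y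
    rw [cosetDist_mk, cosetDist_mk, ← map_inv_eq_map f, mul_inv_rev, inv_inv]
  dist_triangle x y z := by
    obtain ⟨a, rfl⟩ := QuotientGroup.mk_surjective x
    obtain ⟨b, rfl⟩ := QuotientGroup.mk_surjective y
    obtain ⟨c, rfl⟩ := QuotientGroup.mk_surjective z
    simpa only [cosetDist_mk, mul_assoc, mul_inv_cancel_left] using
      map_mul_le_add f (a⁻¹ * b) (b⁻¹ * c)
  eq_of_dist_eq_zero {x y} h := by
    obtain ⟨a, rfl⟩ := QuotientGroup.mk_surjective x
    obtain ⟨b, rfl⟩ := QuotientGroup.mk_surjective y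
    exact QuotientGroup.eq.2 ((hf _).1 h)

lemma cosetDist_smul (g : G) (x y : G ⧸ V) :
    cosetDist f hf (g • x) (g • y) = cosetDist f hf x y := by
  obtain ⟨a, rfl⟩ := QuotientGroup.mk_surjective x
  obtain ⟨b, rfl⟩ := QuotientGroup.mk_surjective y
  simp only [MulAction.Quotient.smul_mk, cosetDist_mk, smul_eq_mul, mul_inv_rev, mul_assoc,
    inv_mul_cancel_left]

lemma one_le_cosetDist (hf_one : ∀ g ∉ V, 1 ≤ f g) {x y : G ⧸ V} (hxy : x ≠ y) :
    1 ≤ cosetDist f hf x y := by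
  obtain ⟨a, rfl⟩ := QuotientGroup.mk_surjective x
  obtain ⟨b, rfl⟩ := QuotientGroup.mk_surjective y
  exact hf_one _ fun h => hxy (QuotientGroup.eq.2 h)

end GroupSeminorm

lemma countable_quotient_of_isOpen {G : Type*} [Group G] [TopologicalSpace G]
    [IsTopologicalGroup G] [TopologicalSpace.SeparableSpace G] {V : Subgroup G}
    (hV : IsOpen (V : Set G)) : Countable (G ⧸ V) :=
  have := QuotientGroup.discreteTopology hV
  have := (QuotientGroup.isQuotientMap_mk V).separableSpace
  TopologicalSpace.separableSpace_iff_countable.1 this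

theorem exists_isometric_action_of_groupSeminorm {G : Type*} [Group G] [TopologicalSpace G]
    [IsTopologicalGroup G] {V : Subgroup G} (hV : IsOpen (V : Set G)) [Countable (G ⧸ V)]
    (f : GroupSeminorm G) (hf : ∀ g, f g = 0 ↔ g ∈ V) (hf_one : ∀ g ∉ V, 1 ≤ f g)
    (hf_unbounded : ∀ C : ℝ, ∃ g, C < f g) :
    ∃ (X : Type) (_ : MetricSpace X) (_ : Countable X) (ρ : G → X → X),
      (∀ x : X, ρ 1 x = x) ∧
      (∀ g h : G, ∀ x : X, ρ (g * h) x = ρ g (ρ h x)) ∧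
      (∀ g : G, Isometry (ρ g)) ∧
      Continuous (fun p : G × X => ρ p.1 p.2) ∧
      (∀ x y : X, ∃ g : G, ρ g x = y) ∧
      (∀ x y : X, x ≠ y → 1 ≤ dist x y) ∧
      (∀ C : ℝ, ∃ x y : X, C < dist x y) := by
  -- `G ⧸ V` lives in the universe of `G`; an opaque copy `X : Type` carries no topology
  -- other than the metric one.
  obtain ⟨X, ⟨e⟩⟩ : ∃ X : Type, Nonempty (G ⧸ V ≃ X) := ⟨Shrink (G ⧸ V), ⟨equivShrink _⟩⟩
  let _ : MetricSpace X := (f.cosetMetricSpace hf).induced e.symm e.symm.injective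
  have dist_eq (x y : X) : dist x y = f.cosetDist hf (e.symm x) (e.symm y) := rfl
  have one_le_dist (x y : X) (hxy : x ≠ y) : 1 ≤ dist x y :=
    f.one_le_cosetDist hf hf_one (e.symm.injective.ne hxy)
  have := QuotientGroup.discreteTopology hV
  have : DiscreteTopology X := .of_forall_le_dist one_pos one_le_dist
  refine ⟨X, inferInstance, e.symm.injective.countable, fun g x => e (g • e.symm x),
    fun x => by simp, fun g h x => by simp [mul_smul], fun g => ?_, ?_, fun x y => ?_,
    one_le_dist, fun C => ?_⟩
  · exact Isometry.of_dist_eq fun x y => by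
      simp only [dist_eq, Equiv.symm_apply_apply, GroupSeminorm.cosetDist_smul]
  · exact continuous_prod_of_discrete_right.2 fun x =>
      continuous_of_discreteTopology.comp (f := (· • e.symm x))
        (continuous_id.smul continuous_const)
  · obtain ⟨g, hg⟩ := MulAction.exists_smul_eq G (e.symm x) (e.symm y)
    exact ⟨g, by simp [hg]⟩
  · obtain ⟨g, hg⟩ := hf_unbounded C
    exact ⟨e (1 : G), e g, by simpa [dist_eq, GroupSeminorm.cosetDist_mk] using hg⟩

/-- Let `G` be a Polish group with an open subgroup `V` such that for every
finite `F ⊆ G` and every `k ≥ 1`, `G ≠ (VF)^k`. Then there is a countable metric space `(X, d)`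
with `d(x,y) ≥ 1` for distinct `x, y` (hence discrete) and a transitive continuous action of `G`
by isometries on `X` such that `X` has infinite diameter. -/
theorem statement7 {G : Type*} [Group G] [TopologicalSpace G] [IsTopologicalGroup G] [PolishSpace G]
    (V : Subgroup G) (hV : IsOpen (V : Set G))
    (hbig : ∀ F : Set G, F.Finite → ∀ k : ℕ, 1 ≤ k → ((V : Set G) * F) ^ k ≠ Set.univ) :
    ∃ (X : Type) (_ : MetricSpace X) (_ : Countable X) (ρ : G → X → X),
      (∀ x : X, ρ 1 x = x) ∧
      (∀ g h : G, ∀ x : X, ρ (g * h) x = ρ g (ρ h x)) ∧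
      (∀ g : G, Isometry (ρ g)) ∧
      Continuous (fun p : G × X => ρ p.1 p.2) ∧
      (∀ x y : X, ∃ g : G, ρ g x = y) ∧
      (∀ x y : X, x ≠ y → 1 ≤ dist x y) ∧
      (∀ C : ℝ, ∃ x y : X, C < dist x y) := by
  have := countable_quotient_of_isOpen hV
  obtain ⟨q, hq⟩ := exists_surjective_nat (G ⧸ V)
  have hu : Function.Surjective fun n => ((q n).out : G ⧸ V) := by
    simpa only [QuotientGroup.out_eq'] using hq
  open RelativeWordLength in
  exact exists_isometric_action_of_groupSeminorm hV (seminorm hu) (seminorm_eq_zero_iff hu)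
    (fun _ => one_le_seminorm hu) (exists_lt_seminorm hu hbig)
end

section
/- There exists a Polish group G with the following properties: (i) G is not locally compact; (ii) G admits a compatible complete left-invariant metric (G is Weil complete); (iii) there is a sequence (gₙ) in G converging to the identity whose terms freely generate a non-abelian free subgroup of G and such that for each n the subgroup generated by g₁,…,gₙ is discrete (G has a free subgroup at 1); and (iv) G has an open subgroup U such that the conjugates fUf⁻¹, for f ∈ G, form a neighbourhood basis at the identity. -/
/-!
Let `F` be the free group on `ℕ` and let `ℤ` act by shifts on the group of sequences `ℤ → F`
that are trivial far to the left; `G` is the semidirect product. The subgroups `V m` of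
unshifted sequences that are trivial below `m` form a decreasing chain with trivial
intersection, and conjugating by the shift by `s` carries `V m` into `V (m + s)`. Hence the
ultrametric `d x y = 2⁻ⁿ`, with `n` the first index such that `x⁻¹ y ∉ V n`, is left-invariant
and makes `G` a topological group in which every `V m` is open and conjugate to `V 0`.
A Cauchy sequence stabilises coordinatewise, so `d` is complete; finitely supported sequences
are dense, so `G` is separable; and `V n / V (n + 1) ≅ F` is infinite, so no neighbourhood of
`1` is compact. The generator `n` is sent to `k ↦ (the word with all generators > k erased)`,
which lies in `V n`; a nontrivial element of `⟨g₀, …, gₙ⟩` has nontrivial `n`-th coordinate,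
so this subgroup meets the open subgroup `V (n + 1)` trivially and is discrete.
-/

open Filter Topology

noncomputable section

section LevelNorm

variable {G : Type*} [Group G] (V : ℕ → Subgroup G)

open scoped Classical

def levelNorm (z : G) : ℝ := if h : ∃ n, z ∉ V n then 2⁻¹ ^ Nat.find h else 0

variable {V}

lemma levelNorm_nonneg (z : G) : 0 ≤ levelNorm V z := by
  unfold levelNorm; split_ifs <;> positivity

lemma levelNorm_lt_iff (hV : Antitone V) {z : G} {n : ℕ} :
    levelNorm V z < 2⁻¹ ^ n ↔ z ∈ V n := by
  unfold levelNorm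
  split_ifs with h
  · rw [pow_lt_pow_iff_right_of_lt_one₀ (by norm_num) (by norm_num), Nat.lt_find_iff]
    exact ⟨fun hz => not_not.1 (hz n le_rfl), fun hz m hm => not_not.2 (hV hm hz)⟩
  · push Not at h
    exact iff_of_true (by positivity) (h n)

lemma levelNorm_eq_zero_iff {z : G} : levelNorm V z = 0 ↔ ∀ n, z ∈ V n := by
  unfold levelNorm
  split_ifs with h
  · exact iff_of_false (by positivity) (not_forall.2 h)
  · exact iff_of_true rfl (by simpa using h)

lemma levelNorm_le_of_forall {z : G} {r : ℝ} (hr : 0 ≤ r) (h : ∀ n, r < 2⁻¹ ^ n → z ∈ V n) :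
    levelNorm V z ≤ r := by
  unfold levelNorm
  split_ifs with hz
  · exact not_lt.1 fun hlt => Nat.find_spec hz (h _ hlt)
  · exact hr

lemma levelNorm_inv (hV : Antitone V) (z : G) : levelNorm V z⁻¹ = levelNorm V z :=
  le_antisymm
    (levelNorm_le_of_forall (levelNorm_nonneg z) fun _ hn => inv_mem ((levelNorm_lt_iff hV).1 hn))
    (levelNorm_le_of_forall (levelNorm_nonneg _) fun _ hn => by
      simpa using inv_mem ((levelNorm_lt_iff hV).1 hn))

lemma levelNorm_mul_le (hV : Antitone V) (a b : G) :
    levelNorm V (a * b) ≤ max (levelNorm V a) (levelNorm V b) :=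
  levelNorm_le_of_forall (le_max_of_le_left (levelNorm_nonneg a)) fun _ hn =>
    mul_mem ((levelNorm_lt_iff hV).1 ((le_max_left _ _).trans_lt hn))
      ((levelNorm_lt_iff hV).1 ((le_max_right _ _).trans_lt hn))

abbrev levelMetricSpace (hV : Antitone V) (hsep : ⨅ n, V n = ⊥) : MetricSpace G where
  dist x y := levelNorm V (x⁻¹ * y)
  dist_self x := by simp [levelNorm_eq_zero_iff, one_mem]
  dist_comm x y := by rw [← levelNorm_inv hV, mul_inv_rev, inv_inv]
  dist_triangle x y z :=
    calc levelNorm V (x⁻¹ * z) = levelNorm V ((x⁻¹ * y) * (y⁻¹ * z)) := by group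
      _ ≤ max (levelNorm V (x⁻¹ * y)) (levelNorm V (y⁻¹ * z)) := levelNorm_mul_le hV _ _
      _ ≤ levelNorm V (x⁻¹ * y) + levelNorm V (y⁻¹ * z) :=
        max_le_add_of_nonneg (levelNorm_nonneg _) (levelNorm_nonneg _)
  eq_of_dist_eq_zero {x y} h := by
    have : x⁻¹ * y ∈ ⨅ n, V n := Subgroup.mem_iInf.2 (levelNorm_eq_zero_iff.1 h)
    rwa [hsep, Subgroup.mem_bot, inv_mul_eq_one] at this

end LevelNorm

section LevelTopology

variable {G : Type*} [Group G] [MetricSpace G] {V : ℕ → Subgroup G}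

lemma dist_lt_two_inv_pow_iff (hV : Antitone V)
    (hdist : ∀ x y : G, dist x y = levelNorm V (x⁻¹ * y)) {x y : G} {n : ℕ} :
    dist x y < 2⁻¹ ^ n ↔ x⁻¹ * y ∈ V n := by
  rw [hdist, levelNorm_lt_iff hV]

lemma ball_one_two_inv_pow (hV : Antitone V)
    (hdist : ∀ x y : G, dist x y = levelNorm V (x⁻¹ * y)) (n : ℕ) :
    Metric.ball (1 : G) (2⁻¹ ^ n) = V n := by
  ext z
  rw [Metric.mem_ball', dist_lt_two_inv_pow_iff hV hdist, inv_one, one_mul, SetLike.mem_coe]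

lemma isOpen_of_levelNorm (hV : Antitone V)
    (hdist : ∀ x y : G, dist x y = levelNorm V (x⁻¹ * y)) (n : ℕ) : IsOpen (V n : Set G) :=
  ball_one_two_inv_pow hV hdist n ▸ Metric.isOpen_ball

lemma hasBasis_nhds_one_of_levelNorm (hV : Antitone V)
    (hdist : ∀ x y : G, dist x y = levelNorm V (x⁻¹ * y)) :
    (𝓝 (1 : G)).HasBasis (fun _ => True) (fun n => (V n : Set G)) := by
  simpa only [ball_one_two_inv_pow hV hdist] using
    Metric.nhds_basis_ball_pow (x := (1 : G)) (by norm_num : (0 : ℝ) < 2⁻¹) (by norm_num)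

lemma dist_mul_left_of_levelNorm
    (hdist : ∀ x y : G, dist x y = levelNorm V (x⁻¹ * y)) (g x y : G) :
    dist (g * x) (g * y) = dist x y := by
  simp only [hdist, mul_inv_rev, mul_assoc, inv_mul_cancel_left]

lemma isTopologicalGroup_of_levelNorm (hV : Antitone V)
    (hdist : ∀ x y : G, dist x y = levelNorm V (x⁻¹ * y))
    (hconj : ∀ x n, ∃ m, ∀ z ∈ V m, x * z * x⁻¹ ∈ V n) : IsTopologicalGroup G := by
  have hB := hasBasis_nhds_one_of_levelNorm hV hdist
  refine IsTopologicalGroup.of_nhds_one ?_ ?_ (fun x₀ => ?_) (fun x₀ => ?_)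
  · exact (hB.prod_self.tendsto_iff hB).2 fun n _ => ⟨n, trivial, fun p hp => mul_mem hp.1 hp.2⟩
  · exact (hB.tendsto_iff hB).2 fun n _ => ⟨n, trivial, fun z hz => inv_mem hz⟩
  · have hiso : Isometry (x₀ * ·) :=
      Isometry.of_dist_eq (dist_mul_left_of_levelNorm hdist x₀)
    rw [hiso.isEmbedding.map_nhds_of_mem _ (by simp [(mul_left_surjective x₀).range_eq]), mul_one]
  · exact (hB.tendsto_iff hB).2 fun n _ => (hconj x₀ n).imp fun m hm => ⟨trivial, hm⟩

lemma dense_of_forall_inv_mul_mem (hV : Antitone V)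
    (hdist : ∀ x y : G, dist x y = levelNorm V (x⁻¹ * y)) {D : Set G}
    (hD : ∀ x n, ∃ y ∈ D, x⁻¹ * y ∈ V n) : Dense D := by
  refine Metric.dense_iff.2 fun x r hr => ?_
  obtain ⟨n, hn⟩ := exists_pow_lt_of_lt_one hr (by norm_num : (2⁻¹ : ℝ) < 1)
  obtain ⟨y, hyD, hy⟩ := hD x n
  exact ⟨y, Metric.mem_ball'.2 (((dist_lt_two_inv_pow_iff hV hdist).2 hy).trans hn), hyD⟩

lemma CauchySeq.exists_forall_inv_mul_mem (hV : Antitone V)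
    (hdist : ∀ x y : G, dist x y = levelNorm V (x⁻¹ * y)) {u : ℕ → G} (hu : CauchySeq u)
    (n : ℕ) : ∃ N, ∀ i ≥ N, ∀ j ≥ N, (u i)⁻¹ * u j ∈ V n := by
  obtain ⟨N, hN⟩ := Metric.cauchySeq_iff.1 hu _ (by positivity : (0 : ℝ) < 2⁻¹ ^ n)
  exact ⟨N, fun i hi j hj => (dist_lt_two_inv_pow_iff hV hdist).1 (hN i hi j hj)⟩

lemma tendsto_of_forall_eventually_inv_mul_mem (hV : Antitone V)
    (hdist : ∀ x y : G, dist x y = levelNorm V (x⁻¹ * y)) {ι : Type*} {l : Filter ι}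
    {u : ι → G} {x : G} (h : ∀ n, ∀ᶠ i in l, x⁻¹ * u i ∈ V n) : Tendsto u l (𝓝 x) := by
  refine Metric.tendsto_nhds.2 fun ε hε => ?_
  obtain ⟨n, hn⟩ := exists_pow_lt_of_lt_one hε (by norm_num : (2⁻¹ : ℝ) < 1)
  filter_upwards [h n] with i hi
  rw [dist_comm]
  exact ((dist_lt_two_inv_pow_iff hV hdist).2 hi).trans hn

end LevelTopology

lemma not_locallyCompactSpace_of_infinite_quotient {G : Type*} [Group G] [TopologicalSpace G]
    [IsTopologicalGroup G]
    (h : ∀ U ∈ 𝓝 (1 : G), ∃ H : Subgroup G, IsOpen (H : Set G) ∧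
      ((QuotientGroup.mk '' U : Set (G ⧸ H))).Infinite) :
    ¬ LocallyCompactSpace G := by
  intro _
  obtain ⟨K, hKc, hK⟩ := exists_compact_mem_nhds (1 : G)
  obtain ⟨H, hH, hinf⟩ := h K hK
  have := QuotientGroup.discreteTopology hH
  exact hinf (hKc.image QuotientGroup.continuous_mk).finite_of_discrete

lemma Subgroup.discreteTopology_of_inf_eq_bot {G : Type*} [Group G] [TopologicalSpace G]
    [IsTopologicalGroup G] {H K : Subgroup G} (hK : IsOpen (K : Set G)) (h : H ⊓ K = ⊥) :
    DiscreteTopology H := by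
  refine discreteTopology_of_isOpen_singleton_one ?_
  have : ({1} : Set H) = Subtype.val ⁻¹' K := by
    ext ⟨x, hx⟩
    simp only [Set.mem_singleton_iff, Set.mem_preimage, SetLike.mem_coe]
    refine ⟨fun h1 => by simp_all [one_mem], fun hxK => ?_⟩
    have : x ∈ H ⊓ K := ⟨hx, hxK⟩
    rw [h, Subgroup.mem_bot] at this
    exact Subtype.ext this
  rw [this]
  exact hK.preimage continuous_subtype_val

def truncateGen (k : ℤ) : FreeGroup ℕ →* FreeGroup ℕ :=
  FreeGroup.lift fun n => if (n : ℤ) ≤ k then FreeGroup.of n else 1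

lemma truncateGen_of (k : ℤ) (n : ℕ) :
    truncateGen k (FreeGroup.of n) = if (n : ℤ) ≤ k then FreeGroup.of n else 1 :=
  FreeGroup.lift_apply_of

lemma truncateGen_of_neg {k : ℤ} (hk : k < 0) : truncateGen k = 1 :=
  FreeGroup.ext_hom _ _ fun n => by simp [truncateGen_of]; omega

lemma truncateGen_comp_self (k : ℤ) : (truncateGen k).comp (truncateGen k) = truncateGen k :=
  FreeGroup.ext_hom _ _ fun n => by by_cases h : (n : ℤ) ≤ k <;> simp [truncateGen_of, h]

lemma eventually_truncateGen_eq (w : FreeGroup ℕ) : ∀ᶠ k in atTop, truncateGen k w = w := by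
  induction w using FreeGroup.induction_on with
  | C1 => simp
  | of n =>
    filter_upwards [eventually_ge_atTop (n : ℤ)] with k hk
    simp [truncateGen_of, hk]
  | inv_of x hx => exact hx.mono fun k hk => by rw [map_inv, hk]
  | mul x y hx hy => exact (hx.and hy).mono fun k hk => by rw [map_mul, hk.1, hk.2]

section

variable (F : Type*) [Group F]

def LaurentSeq : Subgroup (ℤ → F) where
  carrier := {f | ∀ᶠ k in atBot, f k = 1}
  one_mem' := Eventually.of_forall fun _ => rfl
  mul_mem' hf hg := by filter_upwards [hf, hg] with k hfk hgk; simp [hfk, hgk]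
  inv_mem' hf := by filter_upwards [hf] with k hk; simp [hk]

variable {F}

lemma LaurentSeq.comp_sub_mem {f : ℤ → F} (hf : f ∈ LaurentSeq F) (s : ℤ) :
    (fun k => f (k - s)) ∈ LaurentSeq F := by
  show ∀ᶠ k in atBot, f (k - s) = 1
  simpa only [id, sub_eq_add_neg] using
    (tendsto_atBot_add_const_right atBot (-s) tendsto_id).eventually hf

def LaurentSeq.shiftAut (s : ℤ) : MulAut (LaurentSeq F) where
  toFun f := ⟨fun k => f.1 (k - s), comp_sub_mem f.2 s⟩
  invFun f := ⟨fun k => f.1 (k + s), by simpa using comp_sub_mem f.2 (-s)⟩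
  left_inv f := by ext k; simp
  right_inv f := by ext k; simp
  map_mul' _ _ := rfl

def LaurentSeq.shift : Multiplicative ℤ →* MulAut (LaurentSeq F) where
  toFun s := shiftAut s.toAdd
  map_one' := by ext f k; simp [shiftAut]
  map_mul' s t := by ext f k; simp [shiftAut, sub_sub]

@[simp] lemma LaurentSeq.shift_apply (s : Multiplicative ℤ) (f : LaurentSeq F) (k : ℤ) :
    (shift s f).1 k = f.1 (k - s.toAdd) := rfl

variable (F) in
abbrev LaurentWreath := LaurentSeq F ⋊[LaurentSeq.shift] Multiplicative ℤ

namespace LaurentWreath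

open LaurentSeq SemidirectProduct Multiplicative Function

@[simp] lemma left_mul_apply (x y : LaurentWreath F) (k : ℤ) :
    (x * y).left.1 k = x.left.1 k * y.left.1 (k - toAdd x.right) := rfl

@[simp] lemma left_inv_apply (x : LaurentWreath F) (k : ℤ) :
    x⁻¹.left.1 k = (x.left.1 (k + toAdd x.right))⁻¹ := by
  simp only [inv_left, shift_apply, toAdd_inv, sub_neg_eq_add, Subgroup.coe_inv, Pi.inv_apply]

variable (F) in
def basicSubgroup (m : ℤ) : Subgroup (LaurentWreath F) where
  carrier := {x | x.right = 1 ∧ ∀ k < m, x.left.1 k = 1}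
  one_mem' := ⟨rfl, fun _ _ => rfl⟩
  mul_mem' := by
    rintro x y ⟨hx, hxl⟩ ⟨hy, hyl⟩
    refine ⟨by simp [hx, hy], fun k hk => ?_⟩
    simp [hx, hxl k hk, hyl k hk]
  inv_mem' := by
    rintro x ⟨hx, hxl⟩
    exact ⟨by simp [hx], fun k hk => by simp [hx, hxl k hk]⟩

lemma basicSubgroup_antitone : Antitone (basicSubgroup F) :=
  fun _ _ hmn _ hx => ⟨hx.1, fun k hk => hx.2 k (hk.trans_le hmn)⟩

lemma inv_mul_mem_basicSubgroup_iff {x y : LaurentWreath F} {m : ℤ} :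
    x⁻¹ * y ∈ basicSubgroup F m ↔
      x.right = y.right ∧ ∀ k < m + toAdd x.right, x.left.1 k = y.left.1 k := by
  simp only [basicSubgroup, Subgroup.mem_mk, Submonoid.mem_mk, Subsemigroup.mem_mk,
    Set.mem_ofPred_eq, mul_right, inv_right, inv_mul_eq_one, left_mul_apply, left_inv_apply,
    toAdd_inv, sub_neg_eq_add]
  refine and_congr_right fun _ => ⟨fun h k hk => ?_, fun h k hk => ?_⟩
  · simpa using h (k - toAdd x.right) (by omega)
  · exact h _ (by omega)

lemma conj_mem_basicSubgroup {z : LaurentWreath F} {m : ℤ} (hz : z ∈ basicSubgroup F m)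
    (x : LaurentWreath F) : x * z * x⁻¹ ∈ basicSubgroup F (m + toAdd x.right) := by
  obtain ⟨hz, hzl⟩ := hz
  refine ⟨by simp [hz], fun k hk => ?_⟩
  simp [hz, hzl (k - toAdd x.right) (by omega)]

lemma basicSubgroup_natCast_antitone : Antitone fun n : ℕ => basicSubgroup F n :=
  basicSubgroup_antitone.comp_monotone Nat.mono_cast

lemma iInf_basicSubgroup_natCast : ⨅ n : ℕ, basicSubgroup F n = ⊥ := by
  refine eq_bot_iff.2 fun x hx => ?_
  have hx' : ∀ n : ℕ, x ∈ basicSubgroup F n := Subgroup.mem_iInf.1 hx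
  refine SemidirectProduct.ext (Subtype.ext (funext fun k => ?_)) (hx' 0).1
  exact (hx' (k.toNat + 1)).2 k (by omega)

instance : MetricSpace (LaurentWreath F) :=
  levelMetricSpace basicSubgroup_natCast_antitone iInf_basicSubgroup_natCast

lemma dist_eq (x y : LaurentWreath F) :
    dist x y = levelNorm (fun n : ℕ => basicSubgroup F n) (x⁻¹ * y) := rfl

lemma hasBasis_nhds_one :
    (𝓝 (1 : LaurentWreath F)).HasBasis (fun _ => True) (fun n : ℕ => (basicSubgroup F n : Set _)) :=
  hasBasis_nhds_one_of_levelNorm basicSubgroup_natCast_antitone dist_eq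

lemma isOpen_basicSubgroup (n : ℕ) : IsOpen (basicSubgroup F n : Set (LaurentWreath F)) :=
  isOpen_of_levelNorm basicSubgroup_natCast_antitone dist_eq n

instance : IsTopologicalGroup (LaurentWreath F) :=
  isTopologicalGroup_of_levelNorm basicSubgroup_natCast_antitone dist_eq fun x n =>
    ⟨n + (toAdd x.right).natAbs, fun _ hz =>
      basicSubgroup_antitone (by omega) (conj_mem_basicSubgroup hz x)⟩

lemma exists_forall_inv_mul_mem_of_cauchySeq {u : ℕ → LaurentWreath F} (hu : CauchySeq u)
    (m : ℤ) : ∃ N, ∀ i ≥ N, ∀ j ≥ N, (u i)⁻¹ * u j ∈ basicSubgroup F m := by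
  obtain ⟨N, hN⟩ := hu.exists_forall_inv_mul_mem basicSubgroup_natCast_antitone dist_eq m.toNat
  exact ⟨N, fun i hi j hj => basicSubgroup_antitone (Int.self_le_toNat m) (hN i hi j hj)⟩

instance : CompleteSpace (LaurentWreath F) := by
  refine Metric.complete_of_cauchySeq_tendsto fun u hu => ?_
  obtain ⟨N₀, hN₀⟩ := exists_forall_inv_mul_mem_of_cauchySeq hu 0
  set c := (u N₀).right
  have hright : ∀ i ≥ N₀, (u i).right = c := fun i hi =>
    (inv_mul_mem_basicSubgroup_iff.1 (hN₀ N₀ le_rfl i hi)).1.symm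
  have hleft : ∀ m : ℤ, ∃ N, ∀ i ≥ N, ∀ j ≥ N, ∀ k < m + toAdd c,
      (u i).left.1 k = (u j).left.1 k := fun m => by
    obtain ⟨N, hN⟩ := exists_forall_inv_mul_mem_of_cauchySeq hu m
    refine ⟨max N₀ N, fun i hi j hj => ?_⟩
    have := inv_mul_mem_basicSubgroup_iff.1 (hN i (le_of_max_le_right hi) j (le_of_max_le_right hj))
    rw [hright i (le_of_max_le_left hi)] at this
    exact this.2
  choose N hN using hleft
  -- the `k`-th coordinate of the limit is read off once the sequence is stable below `k + 1`
  let l : ℤ → F := fun k => (u (N (k - toAdd c + 1))).left.1 k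
  have hl : ∀ m, ∀ i ≥ N m, ∀ k < m + toAdd c, (u i).left.1 k = l k := fun m i hi k hk => by
    rw [hN m i hi (max i (N (k - toAdd c + 1))) (hi.trans (le_max_left _ _)) k hk]
    exact hN _ _ (le_max_right _ _) _ le_rfl k (by omega)
  have hl_mem : l ∈ LaurentSeq F := by
    filter_upwards [(u (N 0)).left.2, eventually_lt_atBot (toAdd c)] with k hk hkc
    rw [← hl 0 (N 0) le_rfl k (by omega), hk]
  refine ⟨⟨⟨l, hl_mem⟩, c⟩, tendsto_of_forall_eventually_inv_mul_mem
    basicSubgroup_natCast_antitone dist_eq fun n => ?_⟩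
  filter_upwards [eventually_ge_atTop (max N₀ (N n))] with i hi
  refine inv_mul_mem_basicSubgroup_iff.2 ⟨(hright i (le_of_max_le_left hi)).symm, fun k hk => ?_⟩
  exact (hl n i (le_of_max_le_right hi) k hk).symm

lemma countable_setOf_mulSupport_finite [Countable F] :
    {x : LaurentWreath F | (mulSupport x.left.1).Finite}.Countable := by
  have : Countable (Additive F) := inferInstanceAs (Countable F)
  -- `Additive.ofMul` is definitionally the identity: `x.2` bounds the support of the
  -- finsupp, and its coordinates recover those of `x.left`
  let e : {x : LaurentWreath F // (mulSupport x.left.1).Finite} →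
      (ℤ →₀ Additive F) × Multiplicative ℤ :=
    fun x => (Finsupp.ofSupportFinite (fun k => Additive.ofMul (x.1.left.1 k)) x.2, x.1.right)
  refine Set.countable_coe_iff.1 (Injective.countable (f := e) fun x y hxy => ?_)
  obtain ⟨hl, hr⟩ := Prod.ext_iff.1 hxy
  exact Subtype.ext (SemidirectProduct.ext (Subtype.ext (funext (DFunLike.congr_fun hl))) hr)

lemma dense_setOf_mulSupport_finite :
    Dense {x : LaurentWreath F | (mulSupport x.left.1).Finite} := by
  refine dense_of_forall_inv_mul_mem basicSubgroup_natCast_antitone dist_eq fun x n => ?_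
  set M := (n : ℤ) + toAdd x.right
  obtain ⟨a, ha⟩ := eventually_atBot.1 x.left.2
  let l : ℤ → F := fun k => if k < M then x.left.1 k else 1
  have hl : l ∈ LaurentSeq F := by
    filter_upwards [x.left.2] with k hk
    simp [l, hk]
  refine ⟨⟨⟨l, hl⟩, x.right⟩, (Set.finite_Ico a M).subset fun k hk => ?_,
    inv_mul_mem_basicSubgroup_iff.2 ⟨rfl, fun k hk => (if_pos hk).symm⟩⟩
  by_contra hk'
  simp only [Set.mem_Ico, not_and_or, not_le, not_lt] at hk'
  apply hk
  rcases hk' with hk' | hk'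
  · simp [l, ha k hk'.le]
  · simp [l, not_lt.2 hk']

instance [Countable F] : TopologicalSpace.SeparableSpace (LaurentWreath F) :=
  ⟨⟨_, countable_setOf_mulSupport_finite, dense_setOf_mulSupport_finite⟩⟩

def single (m : ℤ) (a : F) : LaurentWreath F :=
  inl ⟨Pi.mulSingle m a, by
    filter_upwards [eventually_lt_atBot m] with k hk
    simp [hk.ne]⟩

lemma single_mem_basicSubgroup (m : ℤ) (a : F) : single m a ∈ basicSubgroup F m :=
  ⟨rfl, fun k hk => by simp [single, hk.ne]⟩

lemma inv_mul_single_mem_basicSubgroup_iff {m : ℤ} {a b : F} :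
    (single m a)⁻¹ * single m b ∈ basicSubgroup F (m + 1) ↔ a = b := by
  refine ⟨fun h => ?_, fun h => h ▸ by simp [one_mem]⟩
  simpa [single] using (inv_mul_mem_basicSubgroup_iff.1 h).2 m (by simp [single])

lemma not_locallyCompactSpace [Infinite F] : ¬ LocallyCompactSpace (LaurentWreath F) := by
  refine not_locallyCompactSpace_of_infinite_quotient fun U hU => ?_
  obtain ⟨n, -, hn⟩ := hasBasis_nhds_one.mem_iff.1 hU
  refine ⟨basicSubgroup F (n + 1 : ℕ), isOpen_basicSubgroup _,
    Set.infinite_of_injective_forall_mem (f := fun a => (single n a : _ ⧸ basicSubgroup F _))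
      (fun a b hab => ?_) fun a => ⟨_, hn (single_mem_basicSubgroup n a), rfl⟩⟩
  rw [QuotientGroup.eq] at hab
  exact inv_mul_single_mem_basicSubgroup_iff.1 (by simpa using hab)

lemma exists_conj_basicSubgroup_subset {W : Set (LaurentWreath F)} (hW : W ∈ 𝓝 1) :
    ∃ f : LaurentWreath F, {y | ∃ u ∈ basicSubgroup F 0, y = f * u * f⁻¹} ⊆ W := by
  obtain ⟨n, -, hn⟩ := hasBasis_nhds_one.mem_iff.1 hW
  refine ⟨inr (ofAdd (n : ℤ)), ?_⟩
  rintro _ ⟨u, hu, rfl⟩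
  exact hn (by simpa using conj_mem_basicSubgroup hu (inr (ofAdd (n : ℤ))))

def freeEmbedding : FreeGroup ℕ →* LaurentWreath (FreeGroup ℕ) :=
  inl.comp <| (MonoidHom.pi truncateGen).codRestrict (LaurentSeq _) fun w => by
    filter_upwards [eventually_lt_atBot 0] with k hk
    simp [truncateGen_of_neg hk]

lemma freeEmbedding_left_apply (w : FreeGroup ℕ) (k : ℤ) :
    (freeEmbedding w).left.1 k = truncateGen k w := rfl

lemma freeEmbedding_injective : Function.Injective freeEmbedding := by
  refine (injective_iff_map_eq_one _).2 fun w hw => ?_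
  obtain ⟨k, hk⟩ := (eventually_truncateGen_eq w).exists
  rw [← hk, ← freeEmbedding_left_apply, hw]
  rfl

lemma freeEmbedding_of_mem_basicSubgroup (n : ℕ) :
    freeEmbedding (FreeGroup.of n) ∈ basicSubgroup _ n :=
  ⟨rfl, fun k hk => by simp [freeEmbedding_left_apply, truncateGen_of, hk.not_ge]⟩

lemma tendsto_freeEmbedding_of : Tendsto (fun n => freeEmbedding (FreeGroup.of n)) atTop (𝓝 1) :=
  hasBasis_nhds_one.tendsto_right_iff.2 fun n _ => by
    filter_upwards [eventually_ge_atTop n] with i hi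
    exact basicSubgroup_natCast_antitone hi (freeEmbedding_of_mem_basicSubgroup i)

lemma closure_freeEmbedding_of_inf_basicSubgroup (n : ℕ) :
    Subgroup.closure ((fun i => freeEmbedding (FreeGroup.of i)) '' Set.Iic n) ⊓
      basicSubgroup _ (n + 1 : ℕ) = ⊥ := by
  have hle : Subgroup.closure ((fun i => freeEmbedding (FreeGroup.of i)) '' Set.Iic n) ≤
      (freeEmbedding.comp (truncateGen n)).range := by
    refine (Subgroup.closure_le _).2 ?_
    rintro _ ⟨i, hi, rfl⟩
    exact ⟨FreeGroup.of i, by simp [truncateGen_of, show (i : ℤ) ≤ n by exact_mod_cast hi]⟩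
  refine eq_bot_iff.2 fun x ⟨hx, hxV⟩ => ?_
  obtain ⟨w, rfl⟩ := hle hx
  have : truncateGen n (truncateGen n w) = 1 := hxV.2 n (by push_cast; omega)
  rw [← MonoidHom.comp_apply, truncateGen_comp_self] at this
  simp [this]

end LaurentWreath

end

open LaurentWreath in
/-- There exists a Polish group `G` such that: (i) `G` is not locally compact;
(ii) `G` admits a compatible complete left-invariant metric (`G` is Weil complete); (iii) `G` has
a free subgroup at `1`: a sequence `(gₙ)` converging to `1` which freely generates a non-abelian
free subgroup and such that each subgroup generated by `g₀, …, gₙ` is discrete; and (iv) `G` has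
an open subgroup `U` whose conjugates `f U f⁻¹` form a neighbourhood basis at the identity. -/
theorem statement13 :
    ∃ (G : Type) (_ : Group G) (_ : TopologicalSpace G) (_ : IsTopologicalGroup G)
      (_ : PolishSpace G),
      (¬ LocallyCompactSpace G) ∧
      (∃ d : G → G → ℝ,
        (∀ x y : G, d x y = d y x) ∧
        (∀ x y : G, d x y = 0 ↔ x = y) ∧
        (∀ x y z : G, d x z ≤ d x y + d y z) ∧
        (∀ g x y : G, d (g * x) (g * y) = d x y) ∧
        (∀ s : Set G, IsOpen s ↔ ∀ x ∈ s, ∃ ε > 0, ∀ y : G, d x y < ε → y ∈ s) ∧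
        (∀ u : ℕ → G, (∀ ε : ℝ, 0 < ε → ∃ N : ℕ, ∀ m ≥ N, ∀ n ≥ N, d (u m) (u n) < ε) →
          ∃ g : G, Filter.Tendsto u Filter.atTop (nhds g))) ∧
      (∃ g : ℕ → G,
        Filter.Tendsto g Filter.atTop (nhds 1) ∧
        (∃ φ : FreeGroup ℕ →* G, Function.Injective φ ∧ ∀ n : ℕ, φ (FreeGroup.of n) = g n) ∧
        (∀ n : ℕ, DiscreteTopology (Subgroup.closure (g '' Set.Iic n) : Subgroup G))) ∧
      (∃ U : Subgroup G, IsOpen (U : Set G) ∧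
        ∀ W ∈ nhds (1 : G), ∃ f : G, { y : G | ∃ u ∈ U, y = f * u * f⁻¹ } ⊆ W) := by
  refine ⟨LaurentWreath (FreeGroup ℕ), inferInstance, inferInstance, inferInstance, inferInstance,
    not_locallyCompactSpace, ⟨dist, dist_comm, fun _ _ => dist_eq_zero, dist_triangle,
      dist_mul_left_of_levelNorm dist_eq, fun s => ?_,
      fun u hu => cauchySeq_tendsto_of_complete (Metric.cauchySeq_iff.2 hu)⟩,
    ⟨_, tendsto_freeEmbedding_of, ⟨freeEmbedding, freeEmbedding_injective, fun _ => rfl⟩,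
      fun n => Subgroup.discreteTopology_of_inf_eq_bot (isOpen_basicSubgroup _)
        (closure_freeEmbedding_of_inf_basicSubgroup n)⟩,
    ⟨basicSubgroup _ (0 : ℕ), isOpen_basicSubgroup 0, fun _ => exists_conj_basicSubgroup_subset⟩⟩
  simp only [Metric.isOpen_iff, Set.subset_def, Metric.mem_ball']
end
end

section
/- Let G be a Polish group which admits a compatible complete left-invariant metric (i.e., G is Weil complete) and which is not locally compact. Then there are open sets V₀ ⊇ V₁ ⊇ V₂ ⊇ … , each containing the identity, such that for every sequence (Fₙ) of finite subsets of G, G ≠ ⋃ₙ Fₙ Vₙ. -/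
open Pointwise Metric Filter Topology

/-!
In a complete group that is not locally compact no ball `B(1, r)` is totally bounded, so there is
`δ > 0` such that, after a left translation, every ball of radius `r` contains a point at distance
`≥ δ` from any given finite set. Iterating `r ↦ δ(r / 2) / 2` from `1` gives radii `sₙ → 0`; put
`Vₙ = B(1, sₙ₊₁)`. Given finite sets `Fₙ`, choose nested closed balls `B(xₙ₊₁, sₙ₊₁) ⊆ B(xₙ, sₙ)`
with `xₙ₊₁` at distance `≥ 2 sₙ₊₁` from `Fₙ`. By completeness they share a point `g`, which is
at distance `> sₙ₊₁` from `Fₙ`, so by left invariance `g ∉ Fₙ Vₙ`.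
-/

theorem exists_forall_mem_closedBall_of_nested {α : Type*} [PseudoMetricSpace α]
    [CompleteSpace α] {x : ℕ → α} {r : ℕ → ℝ} (hr₀ : ∀ n, 0 ≤ r n)
    (hsub : ∀ n, closedBall (x (n + 1)) (r (n + 1)) ⊆ closedBall (x n) (r n))
    (hr : Tendsto r atTop (𝓝 0)) : ∃ g, ∀ n, g ∈ closedBall (x n) (r n) := by
  have hmem : ∀ n m, n ≤ m → x m ∈ closedBall (x n) (r n) := fun n m hnm =>
    antitone_nat_of_succ_le (f := fun n => closedBall (x n) (r n)) hsub hnm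
      (mem_closedBall_self (hr₀ m))
  obtain ⟨g, hg⟩ := cauchySeq_tendsto_of_complete <| cauchySeq_of_le_tendsto_0' r
    (fun n m hnm => mem_closedBall'.1 (hmem n m hnm)) hr
  exact ⟨g, fun n => isClosed_closedBall.mem_of_tendsto hg
    (eventually_atTop.2 ⟨n, fun m => hmem n m⟩)⟩

theorem tendsto_nhds_zero_of_le_half {u : ℕ → ℝ} (h₀ : ∀ n, 0 ≤ u n)
    (h : ∀ n, u (n + 1) ≤ u n / 2) : Tendsto u atTop (𝓝 0) := by
  refine squeeze_zero h₀ (fun n => le_geom (c := 1 / 2) (by norm_num) n fun k _ =>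
    (h k).trans_eq (by ring)) ?_
  simpa using (tendsto_pow_atTop_nhds_zero_of_lt_one (by norm_num : (0 : ℝ) ≤ 1 / 2)
    (by norm_num)).mul_const (u 0)

section MetricGroup

variable {G : Type*} [Group G] [PseudoMetricSpace G]

theorem not_totallyBounded_ball_one [IsTopologicalGroup G] [CompleteSpace G]
    (hG : ¬LocallyCompactSpace G) {r : ℝ} (hr : 0 < r) : ¬TotallyBounded (ball (1 : G) r) :=
  fun h => hG <| (h.closure.isCompact_of_isClosed isClosed_closure)
    |>.locallyCompactSpace_of_mem_nhds_of_group <|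
      mem_of_superset (ball_mem_nhds _ hr) subset_closure

variable [IsIsometricSMul G G]

theorem dist_mul_self_left_eq (f v : G) : dist (f * v) f = dist v 1 := by
  rw [← dist_mul_left f v 1, mul_one]

theorem exists_ball_point_far_from_finite [IsTopologicalGroup G] [CompleteSpace G]
    (hG : ¬LocallyCompactSpace G) {r : ℝ} (hr : 0 < r) :
    ∃ δ, 0 < δ ∧ δ ≤ r ∧
      ∀ (z : G) (t : Set G), t.Finite → ∃ y ∈ ball z r, ∀ f ∈ t, δ ≤ dist y f := by
  have h := not_totallyBounded_ball_one hG hr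
  simp only [totallyBounded_iff, not_forall, not_exists, not_and] at h
  obtain ⟨ε, hε, hcover⟩ := h
  refine ⟨min ε r, lt_min hε hr, min_le_right _ _, fun z t ht => ?_⟩
  obtain ⟨p, hp, hpt⟩ := Set.not_subset.1 (hcover (z⁻¹ • t) ht.smul_set)
  refine ⟨z * p, ?_, fun f hf => ?_⟩
  · rwa [mem_ball, dist_mul_self_left_eq, ← mem_ball]
  · by_contra! hlt
    refine hpt (Set.mem_biUnion (Set.smul_mem_smul_set hf) ?_)
    rw [mem_ball, smul_eq_mul, ← dist_mul_left z, mul_inv_cancel_left]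
    exact hlt.trans_le (min_le_left _ _)

theorem exists_halving_radii_far_from_finite [IsTopologicalGroup G] [CompleteSpace G]
    (hG : ¬LocallyCompactSpace G) :
    ∃ s : ℕ → ℝ, (∀ n, 0 < s n) ∧ (∀ n, s (n + 1) ≤ s n / 2) ∧
      ∀ n (z : G) (t : Set G), t.Finite →
        ∃ y ∈ ball z (s n / 2), ∀ f ∈ t, 2 * s (n + 1) ≤ dist y f := by
  choose! δ hδ₀ hδr hδ using fun r (hr : 0 < r) => exists_ball_point_far_from_finite hG hr
  let s : ℕ → ℝ := fun n => Nat.rec 1 (fun _ r => δ (r / 2) / 2) n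
  have hs_succ : ∀ n, s (n + 1) = δ (s n / 2) / 2 := fun n => rfl
  have hs₀ : ∀ n, 0 < s n := by
    intro n
    induction n with
    | zero => exact one_pos
    | succ n ih => exact hs_succ n ▸ half_pos (hδ₀ _ (half_pos ih))
  refine ⟨s, hs₀, fun n => ?_, fun n z t ht => ?_⟩
  · linarith [hs₀ n, hs_succ n, hδr _ (half_pos (hs₀ n))]
  · obtain ⟨y, hy, hfar⟩ := hδ _ (half_pos (hs₀ n)) z t ht
    exact ⟨y, hy, fun f hf => by linarith [hs_succ n, hfar f hf]⟩

theorem exists_antitone_nhds_one_iUnion_finite_mul_ne_univ [IsTopologicalGroup G]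
    [CompleteSpace G] (hG : ¬LocallyCompactSpace G) :
    ∃ V : ℕ → Set G,
      (∀ n : ℕ, IsOpen (V n) ∧ (1 : G) ∈ V n) ∧
      (∀ n : ℕ, V (n + 1) ⊆ V n) ∧
      (∀ F : ℕ → Set G, (∀ n, (F n).Finite) → (⋃ n : ℕ, F n * V n) ≠ Set.univ) := by
  obtain ⟨s, hs₀, hs_le, hs_far⟩ := exists_halving_radii_far_from_finite hG
  refine ⟨fun n => ball 1 (s (n + 1)), fun n => ⟨isOpen_ball, mem_ball_self (hs₀ _)⟩,
    fun n => ball_subset_ball (by linarith [hs_le (n + 1), hs₀ (n + 2)]), fun F hF hcover => ?_⟩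
  choose y hy_near hy_far using fun n (z : G) => hs_far n z (F n) (hF n)
  let x : ℕ → G := fun n => Nat.rec 1 (fun n z => y n z) n
  have hx_near : ∀ n, dist (x (n + 1)) (x n) < s n / 2 := fun n => hy_near n (x n)
  have hnested : ∀ n, closedBall (x (n + 1)) (s (n + 1)) ⊆ closedBall (x n) (s n) := fun n =>
    closedBall_subset_closedBall' (by linarith [hs₀ n, hs_le n, hx_near n])
  obtain ⟨g, hg⟩ := exists_forall_mem_closedBall_of_nested (fun n => (hs₀ n).le) hnested
    (tendsto_nhds_zero_of_le_half (fun n => (hs₀ n).le) hs_le)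
  obtain ⟨-, ⟨n, rfl⟩, f, hf, v, hv, rfl⟩ := Set.eq_univ_iff_forall.1 hcover g
  have hgf : dist (f * v) f < s (n + 1) := by rwa [dist_mul_self_left_eq, ← mem_ball]
  linarith [hy_far n (x n) f hf, dist_triangle (x (n + 1)) (f * v) f,
    mem_closedBall'.1 (hg (n + 1))]

end MetricGroup

theorem statement14_general {G : Type*} [Group G] [TopologicalSpace G] [IsTopologicalGroup G]
    (d : G → G → ℝ)
    (hsymm : ∀ x y : G, d x y = d y x)
    (hzero : ∀ x y : G, d x y = 0 ↔ x = y)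
    (htri : ∀ x y z : G, d x z ≤ d x y + d y z)
    (hinv : ∀ g x y : G, d (g * x) (g * y) = d x y)
    (hcompat : ∀ s : Set G, IsOpen s ↔ ∀ x ∈ s, ∃ ε > 0, ∀ y : G, d x y < ε → y ∈ s)
    (hcomplete : ∀ u : ℕ → G,
      (∀ ε : ℝ, 0 < ε → ∃ N : ℕ, ∀ m ≥ N, ∀ n ≥ N, d (u m) (u n) < ε) →
      ∃ g : G, Filter.Tendsto u Filter.atTop (nhds g))
    (hnlc : ¬ LocallyCompactSpace G) :
    ∃ V : ℕ → Set G,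
      (∀ n : ℕ, IsOpen (V n) ∧ (1 : G) ∈ V n) ∧
      (∀ n : ℕ, V (n + 1) ⊆ V n) ∧
      (∀ F : ℕ → Set G, (∀ n, (F n).Finite) → (⋃ n : ℕ, F n * V n) ≠ Set.univ) := by
  let _ : MetricSpace G := .ofDistTopology d (fun x => (hzero x x).2 rfl) hsymm htri hcompat
    (fun x y => (hzero x y).1)
  have : IsIsometricSMul G G := ⟨fun g => Isometry.of_dist_eq (hinv g)⟩
  have : CompleteSpace G := Metric.complete_of_cauchySeq_tendsto fun u hu =>
    hcomplete u (Metric.cauchySeq_iff.1 hu)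
  exact exists_antitone_nhds_one_iUnion_finite_mul_ne_univ hnlc

/-- Let `G` be a Polish group admitting a compatible complete left-invariant
metric (Weil complete) and not locally compact. Then there are open sets
`V₀ ⊇ V₁ ⊇ V₂ ⊇ …`, each containing the identity, such that for every sequence `(Fₙ)` of finite
subsets of `G`, `G ≠ ⋃ₙ Fₙ Vₙ`. -/
theorem statement14 {G : Type*} [Group G] [TopologicalSpace G] [IsTopologicalGroup G]
    [PolishSpace G]
    (d : G → G → ℝ)
    (hsymm : ∀ x y : G, d x y = d y x)
    (hzero : ∀ x y : G, d x y = 0 ↔ x = y)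
    (htri : ∀ x y z : G, d x z ≤ d x y + d y z)
    (hinv : ∀ g x y : G, d (g * x) (g * y) = d x y)
    (hcompat : ∀ s : Set G, IsOpen s ↔ ∀ x ∈ s, ∃ ε > 0, ∀ y : G, d x y < ε → y ∈ s)
    (hcomplete : ∀ u : ℕ → G,
      (∀ ε : ℝ, 0 < ε → ∃ N : ℕ, ∀ m ≥ N, ∀ n ≥ N, d (u m) (u n) < ε) →
      ∃ g : G, Filter.Tendsto u Filter.atTop (nhds g))
    (hnlc : ¬ LocallyCompactSpace G) :
    ∃ V : ℕ → Set G,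
      (∀ n : ℕ, IsOpen (V n) ∧ (1 : G) ∈ V n) ∧
      (∀ n : ℕ, V (n + 1) ⊆ V n) ∧
      (∀ F : ℕ → Set G, (∀ n, (F n).Finite) → (⋃ n : ℕ, F n * V n) ≠ Set.univ) :=
  statement14_general d hsymm hzero htri hinv hcompat hcomplete hnlc
end

section
/- Let G be a non-discrete Polish group such that the set A = {g ∈ G : 1 belongs to the closure of the conjugacy class {fgf⁻¹ : f ∈ G}} is not comeagre in any open neighbourhood of 1 (i.e., for every open V ∋ 1, A ∩ V is not comeagre in V). Then there are open sets V₀ ⊇ V₁ ⊇ V₂ ⊇ … , each containing the identity, such that for all sequences (fₙ) and (gₙ) in G, G ≠ ⋃ₙ fₙ Vₙ gₙ. -/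
/-!
Fix a complete compatible metric. The set `A` of elements whose conjugacy class accumulates at `1`
is the intersection of the open conjugation-invariant sets `conjBall (1 / (k + 1))`, so the
hypothesis yields, inside every neighbourhood `N` of `1`, an element `w` and an `ε > 0` such that
no element near `w` has a conjugate in the `ε`-ball at `1`. Choose such `wₙ, εₙ` recursively
inside shrinking neighbourhoods `Nₙ`, and let `Vₙ` be so small that `Vₙ / Vₙ` lies in the
`εₙ`-ball. Given `fₙ, gₙ`, move a point `cₙ₊₁ ∈ {cₙ, cₙ wₙ}`: if `cₙ Nₙ₊₁` meets `fₙ Vₙ gₙ`, then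
`cₙ wₙ Nₙ₊₁` cannot, for otherwise some `wₙ a b⁻¹` with `a, b ∈ Nₙ₊₁` would be conjugate to an
element of `Vₙ / Vₙ`. The closed sets `cₙ · closure Nₙ` are nested, and as `cₙ` takes only
finitely many values at each stage, `Nₙ` can be chosen so that their diameters tend to `0`; the
limit of `cₙ` lies in none of the sets `fₙ Vₙ gₙ`.
-/

open Set Filter Topology Metric Pointwise

def conjAccumOne (G : Type*) [Group G] [TopologicalSpace G] : Set G :=
  {g | (1 : G) ∈ closure {h : G | ∃ f : G, h = f * g * f⁻¹}}

lemma conj_eq_div_of_mul_eq {G : Type*} [Group G] {c w v v' f g a b : G} (hv' : c * v' = f * a * g)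
    (hv : c * w * v = f * b * g) : (f⁻¹ * c) * (w * v * v'⁻¹) * (f⁻¹ * c)⁻¹ = b / a := by
  calc (f⁻¹ * c) * (w * v * v'⁻¹) * (f⁻¹ * c)⁻¹ = f⁻¹ * (c * w * v) * (c * v')⁻¹ * f := by group
    _ = b / a := by rw [hv, hv', div_eq_mul_inv]; group

lemma IsOpen.isNowhereDense_frontier {X : Type*} [TopologicalSpace X] {s : Set X}
    (hs : IsOpen s) : IsNowhereDense (frontier s) := by
  rw [isClosed_frontier.isNowhereDense_iff, ← frontier_compl]
  exact interior_frontier hs.isClosed_compl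

lemma exists_isOpen_mem_closure_subset {X : Type*} [TopologicalSpace X] [RegularSpace X]
    {x : X} {O : Set X} (hO : O ∈ 𝓝 x) : ∃ N, IsOpen N ∧ x ∈ N ∧ closure N ⊆ O := by
  obtain ⟨C, hC, hCc, hCO⟩ := exists_mem_nhds_isClosed_subset hO
  exact ⟨interior C, isOpen_interior, mem_interior_iff_mem_nhds.2 hC,
    (closure_minimal interior_subset hCc).trans hCO⟩

section TopologicalGroup

variable {G : Type*} [Group G] [TopologicalSpace G] [IsTopologicalGroup G]

lemma exists_mem_nhds_one_mul_mul_inv_notMem {S : Set G} {w : G} (hw : w ∉ closure S) :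
    ∃ t ∈ 𝓝 (1 : G), ∀ a ∈ t, ∀ b ∈ t, w * a * b⁻¹ ∉ S := by
  have hcont : Continuous fun p : G × G => w * p.1 * p.2⁻¹ := by fun_prop
  have hmem : (fun p : G × G => w * p.1 * p.2⁻¹) ⁻¹' (closure S)ᶜ ∈ 𝓝 ((1 : G), (1 : G)) :=
    hcont.continuousAt.preimage_mem_nhds (isClosed_closure.isOpen_compl.mem_nhds (by simpa))
  rw [nhds_prod_eq, mem_prod_self_iff] at hmem
  obtain ⟨t, ht, hsub⟩ := hmem
  exact ⟨t, ht, fun a ha b hb hS => hsub (mk_mem_prod ha hb) (subset_closure hS)⟩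

end TopologicalGroup

section Metric

variable {G : Type*} [Group G] [MetricSpace G]

def conjBall (ε : ℝ) : Set G := {x | ∃ f : G, f * x * f⁻¹ ∈ ball (1 : G) ε}

lemma conjAccumOne_eq_iInter : conjAccumOne G = ⋂ k : ℕ, conjBall (1 / (k + 1)) := by
  ext g
  simp only [conjAccumOne, conjBall, mem_iInter, Metric.mem_closure_iff, mem_ball]
  constructor
  · intro h k
    obtain ⟨_, ⟨f, rfl⟩, hf⟩ := h _ Nat.one_div_pos_of_nat
    exact ⟨f, by rwa [dist_comm]⟩
  · intro h ε hε
    obtain ⟨k, hk⟩ := exists_nat_one_div_lt hε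
    obtain ⟨f, hf⟩ := h k
    exact ⟨_, ⟨f, rfl⟩, by rw [dist_comm]; exact hf.trans hk⟩

variable [IsTopologicalGroup G]

lemma isOpen_conjBall (ε : ℝ) : IsOpen (conjBall ε : Set G) := by
  have : (conjBall ε : Set G) = ⋃ f : G, (fun x => f * x * f⁻¹) ⁻¹' ball 1 ε := by
    ext; simp [conjBall]
  rw [this]
  exact isOpen_iUnion fun f => isOpen_ball.preimage (by fun_prop)

lemma exists_notMem_closure_conjBall
    (hA : ∀ V : Set G, IsOpen V → (1 : G) ∈ V → ¬IsMeagre (V \ conjAccumOne G))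
    {S : Set G} (hS : IsOpen S) (h1 : (1 : G) ∈ S) :
    ∃ w ∈ S, ∃ ε > 0, w ∉ closure (conjBall ε) := by
  by_contra! h
  refine hA S hS h1 ((isMeagre_iUnion fun k : ℕ =>
    (isOpen_conjBall (G := G) (1 / (k + 1))).isNowhereDense_frontier.isMeagre).mono ?_)
  rw [conjAccumOne_eq_iInter, sdiff_iInter]
  refine iUnion_mono fun k x ⟨hxS, hx⟩ => ?_
  rw [(isOpen_conjBall _).frontier_eq]
  exact ⟨h x hxS _ Nat.one_div_pos_of_nat, hx⟩

end Metric

namespace PolishGroupCover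

variable {G : Type*} [Group G] [MetricSpace G] [IsTopologicalGroup G]

structure Stage (G : Type*) [Group G] [TopologicalSpace G] where
  N : Set G
  /-- a finite set containing every value the point `escape` can take at this stage -/
  reach : Set G
  isOpen_N : IsOpen N
  one_mem_N : (1 : G) ∈ N
  finite_reach : reach.Finite

structure Stage.Step (s : Stage G) (n : ℕ) where
  w : G
  ε : ℝ
  U : Set G
  next : Stage G
  isOpen_U : IsOpen U
  one_mem_U : (1 : G) ∈ U
  div_mem_ball : ∀ a ∈ U, ∀ b ∈ U, a / b ∈ ball (1 : G) ε
  closure_subset : closure next.N ⊆ s.N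
  smul_closure_subset : w • closure next.N ⊆ s.N
  mul_mul_inv_notMem : ∀ a ∈ next.N, ∀ b ∈ next.N, w * a * b⁻¹ ∉ conjBall ε
  reach_eq : next.reach = s.reach ∪ s.reach * {w}
  smul_closure_subset_closedBall : ∀ c ∈ next.reach, c • closure next.N ⊆ closedBall c ((1 / 2) ^ n)

def Stage.init : Stage G := ⟨univ, {1}, isOpen_univ, mem_univ 1, finite_singleton 1⟩

variable (hA : ∀ V : Set G, IsOpen V → (1 : G) ∈ V → ¬IsMeagre (V \ conjAccumOne G))
include hA

lemma Stage.nonempty_step (s : Stage G) (n : ℕ) : Nonempty (s.Step n) := by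
  obtain ⟨w, hwN, ε, hε, hw⟩ := exists_notMem_closure_conjBall hA s.isOpen_N s.one_mem_N
  obtain ⟨U, hU, hUdiv⟩ := exists_nhds_split_inv (ball_mem_nhds (1 : G) hε)
  obtain ⟨t, ht, htw⟩ := exists_mem_nhds_one_mul_mul_inv_notMem hw
  set reach := s.reach ∪ s.reach * {w}
  have hreach : reach.Finite := s.finite_reach.union (s.finite_reach.mul (finite_singleton w))
  have hO : ∀ᶠ x in 𝓝 (1 : G),
      x ∈ s.N ∧ w * x ∈ s.N ∧ x ∈ t ∧ ∀ c ∈ reach, dist (c * x) c < (1 / 2) ^ n := by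
    have hwN' : ∀ᶠ x in 𝓝 (1 : G), w * x ∈ s.N :=
      ((continuous_const_mul w).tendsto' 1 w (mul_one w)).eventually (s.isOpen_N.mem_nhds hwN)
    have hsmall : ∀ᶠ x in 𝓝 (1 : G), ∀ c ∈ reach, dist (c * x) c < (1 / 2) ^ n :=
      hreach.eventually_all.2 fun c _ =>
        ((continuous_const_mul c).tendsto' 1 c (mul_one c)).eventually
          (ball_mem_nhds c (by positivity))
    filter_upwards [s.isOpen_N.mem_nhds s.one_mem_N, hwN', ht, hsmall] with x h₁ h₂ h₃ h₄
    exact ⟨h₁, h₂, h₃, h₄⟩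
  obtain ⟨N, hNo, hN1, hNO⟩ := exists_isOpen_mem_closure_subset hO
  refine ⟨⟨w, ε, interior U, ⟨N, reach, hNo, hN1, hreach⟩, isOpen_interior,
    mem_interior_iff_mem_nhds.2 hU,
    fun a ha b hb => hUdiv a (interior_subset ha) b (interior_subset hb),
    fun x hx => (hNO hx).1, ?_, ?_, rfl, ?_⟩⟩
  · rintro _ ⟨x, hx, rfl⟩
    exact (hNO hx).2.1
  · exact fun a ha b hb => htw a (hNO (subset_closure ha)).2.2.1 b (hNO (subset_closure hb)).2.2.1
  · rintro c hc _ ⟨x, hx, rfl⟩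
    exact mem_closedBall.2 ((hNO hx).2.2.2 c hc).le

noncomputable def stage : ℕ → Stage G
  | 0 => Stage.init
  | n + 1 => (Classical.choice ((stage n).nonempty_step hA n)).next

noncomputable def step (n : ℕ) : (stage hA n).Step n :=
  Classical.choice ((stage hA n).nonempty_step hA n)

lemma stage_succ (n : ℕ) : stage hA (n + 1) = (step hA n).next := rfl

def coverNhd (n : ℕ) : Set G := ⋂ i ≤ n, (step hA i).U

lemma isOpen_coverNhd (n : ℕ) : IsOpen (coverNhd hA n) :=
  (finite_le_nat n).isOpen_biInter fun i _ => (step hA i).isOpen_U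

lemma one_mem_coverNhd (n : ℕ) : (1 : G) ∈ coverNhd hA n :=
  mem_iInter₂.2 fun i _ => (step hA i).one_mem_U

lemma coverNhd_succ_subset (n : ℕ) : coverNhd hA (n + 1) ⊆ coverNhd hA n :=
  fun _ hx => mem_iInter₂.2 fun i hi => mem_iInter₂.1 hx i (hi.trans n.le_succ)

lemma coverNhd_subset (n : ℕ) : coverNhd hA n ⊆ (step hA n).U :=
  biInter_subset_of_mem (le_refl n)

variable (f g : ℕ → G)

open Classical in
noncomputable def escape : ℕ → G
  | 0 => 1
  | n + 1 =>
    if (escape n • (stage hA (n + 1)).N ∩ (fun v => f n * v * g n) '' coverNhd hA n).Nonempty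
    then escape n * (step hA n).w else escape n

lemma escape_mem_reach : ∀ n, escape hA f g n ∈ (stage hA n).reach
  | 0 => rfl
  | n + 1 => by
    rw [stage_succ, (step hA n).reach_eq, escape]
    split_ifs
    · exact Or.inr (mul_mem_mul (escape_mem_reach n) rfl)
    · exact Or.inl (escape_mem_reach n)

lemma disjoint_escape_succ_smul (n : ℕ) :
    Disjoint (escape hA f g (n + 1) • (stage hA (n + 1)).N)
      ((fun v => f n * v * g n) '' coverNhd hA n) := by
  rw [escape]
  split_ifs with hmeet
  · obtain ⟨_, ⟨v', hv', rfl⟩, a, ha, hav'⟩ := hmeet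
    refine disjoint_left.2 ?_
    rintro _ ⟨v, hv, rfl⟩ ⟨b, hb, hbv⟩
    have hconj := conj_eq_div_of_mul_eq hav'.symm hbv.symm
    exact (step hA n).mul_mul_inv_notMem v hv v' hv' ⟨_, hconj ▸ (step hA n).div_mem_ball b
      (coverNhd_subset hA n hb) a (coverNhd_subset hA n ha)⟩
  · rwa [not_nonempty_iff_eq_empty, ← disjoint_iff_inter_eq_empty] at hmeet

def escapeSet (n : ℕ) : Set G := escape hA f g n • closure (stage hA n).N

lemma isClosed_escapeSet (n : ℕ) : IsClosed (escapeSet hA f g n) :=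
  isClosed_closure.smul _

lemma escape_mem_escapeSet (n : ℕ) : escape hA f g n ∈ escapeSet hA f g n := by
  have h := smul_mem_smul_set (a := escape hA f g n) (subset_closure (stage hA n).one_mem_N)
  rwa [smul_eq_mul, mul_one] at h

lemma escapeSet_succ_subset (n : ℕ) : escapeSet hA f g (n + 1) ⊆ escapeSet hA f g n := by
  refine (smul_set_mono subset_closure).trans' ?_
  rw [escapeSet, escape]
  split_ifs
  · rw [mul_smul]
    exact smul_set_mono (step hA n).smul_closure_subset
  · exact smul_set_mono (step hA n).closure_subset

lemma escapeSet_succ_subset_closedBall (n : ℕ) :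
    escapeSet hA f g (n + 1) ⊆ closedBall (escape hA f g (n + 1)) ((1 / 2) ^ n) :=
  (step hA n).smul_closure_subset_closedBall _ (escape_mem_reach hA f g (n + 1))

lemma disjoint_escapeSet_succ (n : ℕ) :
    Disjoint (escapeSet hA f g (n + 1)) ((fun v => f n * v * g n) '' coverNhd hA n) := by
  rw [escapeSet, ← closure_smul]
  refine (disjoint_escape_succ_smul hA f g n).closure_left ?_
  exact (Homeomorph.mulRight (g n)).isOpenMap.comp (Homeomorph.mulLeft (f n)).isOpenMap _
    (isOpen_coverNhd hA n)

lemma exists_forall_notMem_cover [CompleteSpace G] :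
    ∃ x, ∀ n, x ∉ (fun v => f n * v * g n) '' coverNhd hA n := by
  have hmem : ∀ n m, n ≤ m → escape hA f g m ∈ escapeSet hA f g n := fun n m h =>
    antitone_nat_of_succ_le (escapeSet_succ_subset hA f g) h (escape_mem_escapeSet hA f g m)
  have hcauchy : CauchySeq (escape hA f g) := by
    refine Metric.cauchySeq_iff'.2 fun ε hε => ?_
    obtain ⟨n, hn⟩ := exists_pow_lt_of_lt_one hε (by norm_num : (1 / 2 : ℝ) < 1)
    exact ⟨n + 1, fun m hm =>
      (mem_closedBall.1 (escapeSet_succ_subset_closedBall hA f g n (hmem _ _ hm))).trans_lt hn⟩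
  obtain ⟨x, hx⟩ := cauchySeq_tendsto_of_complete hcauchy
  refine ⟨x, fun n => (disjoint_escapeSet_succ hA f g n).notMem_of_mem_left ?_⟩
  exact (isClosed_escapeSet hA f g _).mem_of_tendsto hx
    (eventually_atTop.2 ⟨n + 1, fun m hm => hmem _ _ hm⟩)

end PolishGroupCover

theorem statement15_general {G : Type*} [Group G] [TopologicalSpace G] [IsTopologicalGroup G]
    [PolishSpace G]
    (hA : ∀ V : Set G, IsOpen V → (1 : G) ∈ V →
      ¬ IsMeagre (V \ { g : G | (1 : G) ∈ closure { h : G | ∃ f : G, h = f * g * f⁻¹ } })) :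
    ∃ V : ℕ → Set G,
      (∀ n : ℕ, IsOpen (V n) ∧ (1 : G) ∈ V n) ∧
      (∀ n : ℕ, V (n + 1) ⊆ V n) ∧
      (∀ f g : ℕ → G, (⋃ n : ℕ, (fun v : G => f n * v * g n) '' V n) ≠ Set.univ) := by
  let := TopologicalSpace.upgradeIsCompletelyMetrizable G
  refine ⟨PolishGroupCover.coverNhd hA, fun n => ⟨PolishGroupCover.isOpen_coverNhd hA n,
    PolishGroupCover.one_mem_coverNhd hA n⟩, PolishGroupCover.coverNhd_succ_subset hA,
    fun f g hcover => ?_⟩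
  obtain ⟨x, hx⟩ := PolishGroupCover.exists_forall_notMem_cover hA f g
  exact (mem_iUnion.1 (hcover ▸ mem_univ x)).elim hx

/-- Let `G` be a non-discrete Polish group such that the set
`A = {g : 1 ∈ closure (conjugacy class of g)}` is not comeagre in any open neighbourhood `V` of
`1` (for `V` open this means `V \ A` is not meagre). Then there are open sets
`V₀ ⊇ V₁ ⊇ V₂ ⊇ …`, each containing the identity, such that for all sequences `(fₙ)`, `(gₙ)` in
`G`, `G ≠ ⋃ₙ fₙ Vₙ gₙ`. -/
theorem statement15 {G : Type*} [Group G] [TopologicalSpace G] [IsTopologicalGroup G]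
    [PolishSpace G]
    (hnd : ¬ DiscreteTopology G)
    (hA : ∀ V : Set G, IsOpen V → (1 : G) ∈ V →
      ¬ IsMeagre (V \ { g : G | (1 : G) ∈ closure { h : G | ∃ f : G, h = f * g * f⁻¹ } })) :
    ∃ V : ℕ → Set G,
      (∀ n : ℕ, IsOpen (V n) ∧ (1 : G) ∈ V n) ∧
      (∀ n : ℕ, V (n + 1) ⊆ V n) ∧
      (∀ f g : ℕ → G, (⋃ n : ℕ, (fun v : G => f n * v * g n) '' V n) ≠ Set.univ) :=
  statement15_general hA
end
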